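/- arXiv:1110.1693 — 8 statements merged into one kernel-verified Lean document; each statement's English description precedes it below -/
import Mathlib

section
/- If G is a chordal graph, then the square of its line graph L(G)^2 is chordal. -/
open SimpleGraph

/-- The square of a graph: same vertices, adjacency iff distance 1 or 2. -/
def SimpleGraph.square {V : Type*} (G : SimpleGraph V) : SimpleGraph V where
  Adj u v := u ≠ v ∧ (G.Adj u v ∨ ∃ w, G.Adj u w ∧ G.Adj w v)
  symm := ⟨by
    rintro u v ⟨h, h' | ⟨w, hw1, hw2⟩⟩
    · exact ⟨h.symm, Or.inl h'.symm⟩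
    · exact ⟨h.symm, Or.inr ⟨w, hw2.symm, hw1.symm⟩⟩⟩
  loopless := ⟨fun v h => h.1 rfl⟩

/-- `G` has an induced cycle of length `n`. -/
def SimpleGraph.HasInducedCycle {V : Type*} (G : SimpleGraph V) (n : ℕ) : Prop :=
  Nonempty (cycleGraph n ↪g G)

/-- A graph is chordal if it has no induced cycle of length at least 4. -/
def SimpleGraph.Chordal {V : Type*} (G : SimpleGraph V) : Prop :=
  ∀ n, 4 ≤ n → ¬ G.HasInducedCycle n

/-!
Let `e₀, …, eₙ₋₁` (`n ≥ 4`) be an induced cycle of `L(G)²`. Consecutive edges have an equal or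
adjacent pair of endpoints, while no endpoint of `eᵢ` equals or is adjacent to an endpoint of a
non-consecutive `eⱼ`. Choosing such a pair `xᵢ ∈ eᵢ`, `yᵢ ∈ eᵢ₊₁` for every `i` gives a closed lazy
walk `x₀ y₀ x₁ y₁ …` in `G`; take a choice with the fewest genuine moves. A repetition or chord of
this walk between times at most three apart that is not caused by a stay could be shortcut by
changing a single pair `(xᵢ, yᵢ)`, lowering the number of moves; all other repetitions and chords
are excluded by the separation of non-consecutive edges. So deleting the stays leaves an induced
cycle of `G` of length at least `n`.
-/

namespace Nat

theorem nth_succ_le_add_two {p : ℕ → Prop} (hp : ∀ t, p t ∨ p (t + 1)) (j : ℕ) :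
    nth p (j + 1) ≤ nth p j + 2 := by
  obtain ⟨a, hja, haj, hpa⟩ : ∃ a, nth p j < a ∧ a ≤ nth p j + 2 ∧ p a := by
    rcases hp (nth p j + 1) with h | h
    · exact ⟨_, by omega, by omega, h⟩
    · exact ⟨_, by omega, by omega, h⟩
  by_contra h
  exact absurd (le_nth_of_lt_nth_succ (k := j) (by omega) hpa) (by omega)

theorem nth_add_count_of_periodic {p : ℕ → Prop} [DecidablePred p] {N : ℕ}
    (hper : ∀ t, p (t + N) ↔ p t) (hinf : (Set.ofPred p).Infinite) (j : ℕ) :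
    nth p (j + count p N) = nth p j + N := by
  have hcount : count p (nth p j + N) = j + count p N := by
    rw [add_comm (nth p j), count_add]
    simp only [add_comm N, hper, count_nth_of_infinite hinf]
    ring
  rw [← hcount, nth_count ((hper _).2 (nth_mem_of_infinite hinf j))]

end Nat

namespace SimpleGraph

variable {V : Type*} {G : SimpleGraph V}

theorem eq_or_adj_of_mem_edgeSet {e : Sym2 V} (he : e ∈ G.edgeSet) {x y : V} (hx : x ∈ e)
    (hy : y ∈ e) : x = y ∨ G.Adj x y := by
  by_cases hxy : x = y
  · exact Or.inl hxy
  · rw [(Sym2.mem_and_mem_iff hxy).1 ⟨hx, hy⟩] at he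
    exact Or.inr he

theorem lineGraph_square_adj_iff {e f : G.edgeSet} :
    G.lineGraph.square.Adj e f ↔
      e ≠ f ∧ ∃ x ∈ (e : Sym2 V), ∃ y ∈ (f : Sym2 V), x = y ∨ G.Adj x y := by
  simp only [square, lineGraph_adj_iff_exists]
  refine and_congr_right fun hef => ⟨?_, ?_⟩
  · rintro (⟨-, x, hxe, hxf⟩ | ⟨g, ⟨-, x, hxe, hxg⟩, ⟨-, y, hyg, hyf⟩⟩)
    · exact ⟨x, hxe, x, hxf, Or.inl rfl⟩
    · exact ⟨x, hxe, y, hyf, eq_or_adj_of_mem_edgeSet g.2 hxg hyg⟩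
  · rintro ⟨x, hxe, y, hyf, rfl | hxy⟩
    · exact Or.inl ⟨hef, x, hxe, hyf⟩
    · let g : G.edgeSet := ⟨s(x, y), hxy⟩
      have hxg : x ∈ (g : Sym2 V) := Sym2.mem_mk_left x y
      have hyg : y ∈ (g : Sym2 V) := Sym2.mem_mk_right x y
      by_cases hge : g = e
      · exact Or.inl ⟨hef, y, hge ▸ hyg, hyf⟩
      by_cases hgf : g = f
      · exact Or.inl ⟨hef, x, hxe, hgf ▸ hxg⟩
      exact Or.inr ⟨g, ⟨Ne.symm hge, x, hxe, hxg⟩, ⟨hgf, y, hyg, hyf⟩⟩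

theorem cycleGraph_adj_iff_val {m : ℕ} {i j : Fin m} :
    (cycleGraph m).Adj i j ↔ 2 ≤ m ∧ (i.val = j.val + 1 ∨ j.val = i.val + 1 ∨
      (i.val = 0 ∧ j.val = m - 1) ∨ (j.val = 0 ∧ i.val = m - 1)) := by
  have key : ∀ a b : Fin m,
      (a - b).val = 1 ↔ 2 ≤ m ∧ (a.val = b.val + 1 ∨ (a.val = 0 ∧ b.val = m - 1)) := by
    intro a b
    have := a.isLt
    have := b.isLt
    rcases le_or_gt b a with h | h
    · rw [Fin.coe_sub_iff_le.2 h]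
      rw [Fin.le_def] at h
      omega
    · rw [Fin.coe_sub_iff_lt.2 h]
      rw [Fin.lt_def] at h
      omega
  rw [cycleGraph_adj', key, key]
  tauto

theorem hasInducedCycle_of_chordless {f : ℕ → V} {m : ℕ}
    (hadj : ∀ j, G.Adj (f j) (f (j + 1))) (hwrap : f m = f 0)
    (hchord : ∀ a b, a + 2 ≤ b → b < m → ¬(a = 0 ∧ b = m - 1) →
      ¬(f a = f b ∨ G.Adj (f a) (f b))) :
    G.HasInducedCycle m := by
  have hm : m ≠ 1 := by
    rintro rfl
    exact (hadj 0).ne hwrap.symm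
  have hlast : 1 ≤ m → G.Adj (f (m - 1)) (f 0) := fun h => by
    simpa [Nat.sub_add_cancel h, hwrap] using hadj (m - 1)
  have hcons : ∀ a b, a < b → b < m → (f a = f b ∨ G.Adj (f a) (f b)) →
      b = a + 1 ∨ (a = 0 ∧ b = m - 1) := by
    intro a b hab hbm h
    by_contra hne
    exact hchord a b (by omega) hbm (by tauto) h
  have hne : ∀ a b, a < b → b < m → f a ≠ f b := by
    intro a b hab hbm heq
    rcases hcons a b hab hbm (Or.inl heq) with rfl | ⟨rfl, rfl⟩
    · exact (hadj a).ne heq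
    · exact (hlast (by omega)).ne heq.symm
  have hinj : Function.Injective fun j : Fin m => f j := by
    intro i j hij
    rcases lt_trichotomy i.val j.val with h | h | h
    · exact absurd hij (hne _ _ h j.isLt)
    · exact Fin.ext h
    · exact absurd hij.symm (hne _ _ h i.isLt)
  refine ⟨⟨⟨fun j => f j, hinj⟩, fun {i j} => ?_⟩⟩
  change G.Adj (f i) (f j) ↔ _
  rw [cycleGraph_adj_iff_val]
  constructor
  · intro h
    refine ⟨by have := i.isLt; omega, ?_⟩
    rcases lt_trichotomy i.val j.val with hij | hij | hij
    · have := hcons _ _ hij j.isLt (Or.inr h)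
      tauto
    · rw [hij] at h
      exact absurd h G.irrefl
    · have := hcons _ _ hij i.isLt (Or.inr h.symm)
      tauto
  · rintro ⟨hm2, h | h | ⟨hi, hj⟩ | ⟨hj, hi⟩⟩
    · rw [h]; exact (hadj _).symm
    · rw [h]; exact hadj _
    · rw [hi, hj]; exact (hlast (by omega)).symm
    · rw [hi, hj]; exact hlast (by omega)

/-- A closed lazy walk of period `N` whose coincidences and chords between times at most three
apart are all explained by its stays. -/
structure IsLazyHole (G : SimpleGraph V) (N : ℕ) (w : ℕ → V) : Prop where
  periodic : ∀ t, w (t + N) = w t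
  touch_succ : ∀ t, w t = w (t + 1) ∨ G.Adj (w t) (w (t + 1))
  not_stay_stay : ∀ t, ¬(w t = w (t + 1) ∧ w (t + 1) = w (t + 2))
  stay_of_touch_two : ∀ t, (w t = w (t + 2) ∨ G.Adj (w t) (w (t + 2))) →
    w (t + 1) = w t ∨ w (t + 1) = w (t + 2)
  stays_of_touch_three : ∀ t, (w t = w (t + 3) ∨ G.Adj (w t) (w (t + 3))) →
    w t = w (t + 1) ∧ w (t + 2) = w (t + 3)
  not_touch : ∀ t d, 4 ≤ d → d + 4 ≤ N → ¬(w t = w (t + d) ∨ G.Adj (w t) (w (t + d)))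

noncomputable def moveTime (w : ℕ → V) : ℕ → ℕ := Nat.nth fun t => w t ≠ w (t + 1)

namespace IsLazyHole

variable {N : ℕ} {w : ℕ → V}

theorem move_or_move_succ (hw : G.IsLazyHole N w) (t : ℕ) :
    w t ≠ w (t + 1) ∨ w (t + 1) ≠ w (t + 1 + 1) := by
  simpa only [not_and_or] using hw.not_stay_stay t

theorem infinite_moves (hw : G.IsLazyHole N w) :
    (Set.ofPred fun t => w t ≠ w (t + 1)).Infinite :=
  Set.infinite_of_forall_exists_gt fun a => by
    rcases hw.move_or_move_succ (a + 1) with h | h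
    · exact ⟨a + 1, h, by omega⟩
    · exact ⟨a + 2, h, by omega⟩

theorem moveTime_lt_moveTime (hw : G.IsLazyHole N w) {i j : ℕ} :
    moveTime w i < moveTime w j ↔ i < j :=
  Nat.nth_lt_nth hw.infinite_moves

theorem moveTime_move (hw : G.IsLazyHole N w) (j : ℕ) :
    w (moveTime w j) ≠ w (moveTime w j + 1) :=
  Nat.nth_mem_of_infinite hw.infinite_moves j

theorem moveTime_succ_le (hw : G.IsLazyHole N w) (j : ℕ) :
    moveTime w (j + 1) ≤ moveTime w j + 2 :=
  Nat.nth_succ_le_add_two hw.move_or_move_succ j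

theorem exists_moveTime_add (hw : G.IsLazyHole N w) :
    ∃ m, ∀ j, moveTime w (j + m) = moveTime w j + N := by
  classical
  exact ⟨_, Nat.nth_add_count_of_periodic
    (fun t => by simp only [hw.periodic, add_right_comm t N 1]) hw.infinite_moves⟩

theorem apply_moveTime_add_one (hw : G.IsLazyHole N w) (j : ℕ) :
    w (moveTime w j + 1) = w (moveTime w (j + 1)) := by
  have hlt := hw.moveTime_lt_moveTime.2 (by omega : j < j + 1)
  have hstay : ∀ k, moveTime w j + 1 + k ≤ moveTime w (j + 1) →
      w (moveTime w j + 1) = w (moveTime w j + 1 + k) := by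
    intro k
    induction k with
    | zero => simp
    | succ k ih =>
      intro hk
      rw [ih (by omega), ← add_assoc]
      by_contra hmove
      have : moveTime w j + 1 + k ≤ moveTime w j :=
        Nat.le_nth_of_lt_nth_succ (show _ < moveTime w (j + 1) by omega) hmove
      omega
  simpa [Nat.add_sub_cancel' hlt] using hstay (moveTime w (j + 1) - (moveTime w j + 1)) (by omega)

theorem not_touch_of_moves (hw : G.IsLazyHole N w) {x y : ℕ} (hx : w x ≠ w (x + 1))
    (hy : w y ≠ w (y + 1)) (hxy : x < y) (hyN : y + 5 ≤ x + N) :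
    ¬(w x = w (y + 1) ∨ G.Adj (w x) (w (y + 1))) := by
  intro h
  obtain rfl | rfl | hy3 : y = x + 1 ∨ y = x + 2 ∨ x + 3 ≤ y := by omega
  · rcases hw.stay_of_touch_two x h with h' | h'
    · exact hx h'.symm
    · exact hy h'
  · exact hx (hw.stays_of_touch_three x h).1
  · refine hw.not_touch x (y + 1 - x) (by omega) (by omega) ?_
    rwa [Nat.add_sub_cancel' (by omega)]

theorem exists_hasInducedCycle (hw : G.IsLazyHole N w) (hN : 8 ≤ N) :
    ∃ m, 4 ≤ m ∧ G.HasInducedCycle m := by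
  obtain ⟨m, hc_period⟩ := hw.exists_moveTime_add
  have hc_m : moveTime w m = moveTime w 0 + N := by simpa using hc_period 0
  have hm4 : 4 ≤ m := by
    have hspan : ∀ k, moveTime w k ≤ moveTime w 0 + 2 * k := fun k => by
      induction k with
      | zero => simp
      | succ k ih => have := hw.moveTime_succ_le k; omega
    have := hspan m
    omega
  -- `w` is constant on `(moveTime w j, moveTime w (j + 1)]`; these blocks are the cycle's vertices
  refine ⟨m, hm4, hasInducedCycle_of_chordless (f := fun j => w (moveTime w j + 1))
    (fun j => ?_) ?_ ?_⟩
  · show G.Adj (w (moveTime w j + 1)) (w (moveTime w (j + 1) + 1))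
    rw [hw.apply_moveTime_add_one j]
    exact (hw.touch_succ _).resolve_left (hw.moveTime_move _)
  · show w (moveTime w m + 1) = w (moveTime w 0 + 1)
    rw [hc_m, add_right_comm, hw.periodic]
  · intro a b hab hbm hwrap h
    have := hw.moveTime_lt_moveTime.2 (show a < a + 1 by omega)
    have := hw.moveTime_lt_moveTime.2 (show b < b + 1 by omega)
    -- the blocks `a` and `b` are far apart along one of the two arcs between them
    by_cases hshort : moveTime w b + 5 ≤ moveTime w (a + 1) + N
    · refine hw.not_touch_of_moves (hw.moveTime_move (a + 1)) (hw.moveTime_move b)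
        (hw.moveTime_lt_moveTime.2 (by omega)) hshort ?_
      rwa [← hw.apply_moveTime_add_one a]
    · have := hc_period a
      refine hw.not_touch_of_moves (hw.moveTime_move (b + 1)) (hw.moveTime_move (a + m))
        (hw.moveTime_lt_moveTime.2 (by omega)) (by omega) ?_
      rw [← hw.apply_moveTime_add_one b, this, add_right_comm, hw.periodic]
      exact h.imp Eq.symm G.adj_symm

end IsLazyHole

open scoped Classical in
noncomputable def stepCost (a b : V) : ℕ := if a = b then 0 else 1

@[simp] theorem stepCost_self (a : V) : stepCost a a = 0 := by simp [stepCost]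

theorem stepCost_of_ne {a b : V} (h : a ≠ b) : stepCost a b = 1 := by simp [stepCost, h]

theorem stepCost_eq_zero {a b : V} : stepCost a b = 0 ↔ a = b := by simp [stepCost]

theorem stepCost_le_one (a b : V) : stepCost a b ≤ 1 := by
  unfold stepCost; split <;> omega

section EdgeCycle

open Fin.CommRing

variable {n : ℕ} [NeZero n] {E : Fin n → Sym2 V} {τ : Fin n → V × V}

structure IsSeparatedEdgeCycle (G : SimpleGraph V) (E : Fin n → Sym2 V) : Prop where
  mem_edgeSet : ∀ i, E i ∈ G.edgeSet
  exists_touch_succ : ∀ i, ∃ x ∈ E i, ∃ y ∈ E (i + 1), x = y ∨ G.Adj x y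
  not_touch : ∀ i (d : ℕ), 2 ≤ d → d + 2 ≤ n →
    ∀ x ∈ E i, ∀ y ∈ E (i + d), ¬(x = y ∨ G.Adj x y)

theorem isSeparatedEdgeCycle_of_embedding (hn : 2 ≤ n)
    (φ : cycleGraph n ↪g G.lineGraph.square) :
    G.IsSeparatedEdgeCycle fun i => (φ i : Sym2 V) where
  mem_edgeSet i := (φ i).2
  exists_touch_succ i := by
    have hadj : (cycleGraph n).Adj i (i + 1) := by
      rw [cycleGraph_adj', add_sub_cancel_left, Fin.val_one', Nat.mod_eq_of_lt (by omega)]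
      exact Or.inr rfl
    exact (lineGraph_square_adj_iff.1 (φ.map_rel_iff.2 hadj)).2
  not_touch i d hd hdn x hx y hy hxy := by
    have hdval : ((d : Fin n) : ℕ) = d := by rw [Fin.val_natCast, Nat.mod_eq_of_lt (by omega)]
    have hd0 : (d : Fin n) ≠ 0 := fun h => by rw [h, Fin.val_zero] at hdval; omega
    have hne : i ≠ i + d := fun h => hd0 (by simpa using h.symm)
    have hnadj : ¬(cycleGraph n).Adj i (i + d) := by
      rw [cycleGraph_adj', sub_add_cancel_left, add_sub_cancel_left, Fin.val_neg, if_neg hd0,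
        hdval]
      omega
    exact hnadj (φ.map_rel_iff.1
      (lineGraph_square_adj_iff.2 ⟨φ.injective.ne hne, x, hx, y, hy, hxy⟩))

theorem IsSeparatedEdgeCycle.not_touch_two (hE : G.IsSeparatedEdgeCycle E) (hn : 4 ≤ n)
    {i : Fin n} {x y : V} (hx : x ∈ E i) (hy : y ∈ E (i + 2)) : ¬(x = y ∨ G.Adj x y) :=
  hE.not_touch i 2 le_rfl hn x hx y (by simpa using hy)

def IsLinkage (G : SimpleGraph V) (E : Fin n → Sym2 V) (τ : Fin n → V × V) : Prop :=
  ∀ i, (τ i).1 ∈ E i ∧ (τ i).2 ∈ E (i + 1) ∧ ((τ i).1 = (τ i).2 ∨ G.Adj (τ i).1 (τ i).2)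

/-- The number of genuine moves of the lazy closed walk `x₀ y₀ x₁ y₁ …`, where
`τ i = (xᵢ, yᵢ)`. -/
noncomputable def linkageCost (τ : Fin n → V × V) : ℕ :=
  ∑ i, (stepCost (τ i).1 (τ i).2 + stepCost (τ i).2 (τ (i + 1)).1)

theorem linkageCost_update (hn : 2 ≤ n) (τ : Fin n → V × V) (i : Fin n) (a b : V) :
    linkageCost (Function.update τ i (a, b)) +
        (stepCost (τ (i - 1)).2 (τ i).1 + stepCost (τ i).1 (τ i).2 +
          stepCost (τ i).2 (τ (i + 1)).1) =
      linkageCost τ + (stepCost (τ (i - 1)).2 a + stepCost a b + stepCost b (τ (i + 1)).1) := by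
  have : Nontrivial (Fin n) := Fin.nontrivial_iff_two_le.2 hn
  have hsucc : i + 1 ≠ i := by simp
  have hpred : i - 1 ≠ i := by simp
  set g : (Fin n → V × V) → Fin n → ℕ :=
    fun σ j => stepCost (σ j).1 (σ j).2 + stepCost (σ j).2 (σ (j + 1)).1
  have hsplit : ∀ σ, linkageCost σ =
      g σ i + (g σ (i - 1) + ∑ j ∈ (Finset.univ.erase i).erase (i - 1), g σ j) := fun σ => by
    rw [Finset.add_sum_erase _ _ (Finset.mem_erase.2 ⟨hpred, Finset.mem_univ _⟩),
      Finset.add_sum_erase _ _ (Finset.mem_univ _)]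
    rfl
  have hrest : ∀ j ∈ (Finset.univ.erase i).erase (i - 1),
      g (Function.update τ i (a, b)) j = g τ j := by
    intro j hj
    simp only [Finset.mem_erase] at hj
    have hj1 : j + 1 ≠ i := fun h => hj.1 (by rw [← h, add_sub_cancel_right])
    simp only [g, Function.update_of_ne hj.2.1, Function.update_of_ne hj1]
  rw [hsplit, hsplit, Finset.sum_congr rfl hrest]
  simp only [g, Function.update_self, Function.update_of_ne hsucc, Function.update_of_ne hpred,
    sub_add_cancel]
  ring

structure IsMinimalLinkage (G : SimpleGraph V) (E : Fin n → Sym2 V) (τ : Fin n → V × V) :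
    Prop where
  isLinkage : IsLinkage G E τ
  cost_le : ∀ σ, IsLinkage G E σ → linkageCost τ ≤ linkageCost σ

theorem IsSeparatedEdgeCycle.exists_isMinimalLinkage (hE : G.IsSeparatedEdgeCycle E) :
    ∃ τ, IsMinimalLinkage G E τ := by
  choose x hx y hy hxy using hE.exists_touch_succ
  obtain ⟨τ, hτ, hmin⟩ := (measure linkageCost).wf.has_min {τ | IsLinkage G E τ}
    ⟨fun i => (x i, y i), fun i => ⟨hx i, hy i, hxy i⟩⟩
  exact ⟨τ, hτ, fun σ hσ => not_lt.1 (hmin σ hσ)⟩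

namespace IsMinimalLinkage

theorem window_le (hτ : IsMinimalLinkage G E τ) (hn : 2 ≤ n) {i : Fin n} {a b : V}
    (ha : a ∈ E i) (hb : b ∈ E (i + 1)) (hab : a = b ∨ G.Adj a b) :
    stepCost (τ (i - 1)).2 (τ i).1 + stepCost (τ i).1 (τ i).2 + stepCost (τ i).2 (τ (i + 1)).1 ≤
      stepCost (τ (i - 1)).2 a + stepCost a b + stepCost b (τ (i + 1)).1 := by
  have hlink : IsLinkage G E (Function.update τ i (a, b)) := by
    intro j
    by_cases hj : j = i
    · subst hj
      simpa using ⟨ha, hb, hab⟩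
    · simpa only [Function.update_of_ne hj] using hτ.isLinkage j
  have := hτ.cost_le _ hlink
  have := linkageCost_update hn τ i a b
  omega

end IsMinimalLinkage

namespace IsLinkage

theorem snd_pred_mem (hτ : IsLinkage G E τ) (i : Fin n) : (τ (i - 1)).2 ∈ E i := by
  simpa using (hτ (i - 1)).2.1

theorem touch_snd_pred_fst (hτ : IsLinkage G E τ) (hE : G.IsSeparatedEdgeCycle E) (i : Fin n) :
    (τ (i - 1)).2 = (τ i).1 ∨ G.Adj (τ (i - 1)).2 (τ i).1 :=
  eq_or_adj_of_mem_edgeSet (hE.mem_edgeSet i) (hτ.snd_pred_mem i) (hτ i).1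

theorem not_stay_stay_pred (hτ : IsLinkage G E τ) (hE : G.IsSeparatedEdgeCycle E) (hn : 4 ≤ n)
    (i : Fin n) : ¬((τ (i - 1)).2 = (τ i).1 ∧ (τ i).1 = (τ i).2) := by
  rintro ⟨h₁, h₂⟩
  have hmem : (τ (i - 1)).2 ∈ E (i - 1 + 2) := by
    rw [h₁, h₂, show i - 1 + 2 = i + 1 by ring]
    exact (hτ i).2.1
  exact hE.not_touch_two hn (hτ (i - 1)).1 hmem (hτ (i - 1)).2.2

theorem not_stay_stay (hτ : IsLinkage G E τ) (hE : G.IsSeparatedEdgeCycle E) (hn : 4 ≤ n)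
    (i : Fin n) : ¬((τ i).1 = (τ i).2 ∧ (τ i).2 = (τ (i + 1)).1) := by
  rintro ⟨h₁, h₂⟩
  have hmem : (τ (i + 1)).2 ∈ E (i + 2) := by
    rw [show i + 2 = i + 1 + 1 by ring]
    exact (hτ (i + 1)).2.1
  exact hE.not_touch_two hn (hτ i).1 hmem (by rw [h₁, h₂]; exact (hτ (i + 1)).2.2)

theorem not_touch_fst_snd_succ (hτ : IsLinkage G E τ) (hE : G.IsSeparatedEdgeCycle E)
    (hn : 4 ≤ n) (i : Fin n) : ¬((τ i).1 = (τ (i + 1)).2 ∨ G.Adj (τ i).1 (τ (i + 1)).2) :=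
  hE.not_touch_two hn (hτ i).1 (by rw [show i + 2 = i + 1 + 1 by ring]; exact (hτ (i + 1)).2.1)

end IsLinkage

namespace IsMinimalLinkage

theorem fst_eq_or_eq_of_touch (hτ : IsMinimalLinkage G E τ) (hn : 2 ≤ n) (i : Fin n)
    (h : (τ (i - 1)).2 = (τ i).2 ∨ G.Adj (τ (i - 1)).2 (τ i).2) :
    (τ i).1 = (τ (i - 1)).2 ∨ (τ i).1 = (τ i).2 := by
  have hle := hτ.window_le hn (hτ.isLinkage.snd_pred_mem i) (hτ.isLinkage i).2.1 h
  by_contra! hne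
  rw [stepCost_self, stepCost_of_ne (Ne.symm hne.1), stepCost_of_ne hne.2] at hle
  have := stepCost_le_one (τ (i - 1)).2 (τ i).2
  omega

theorem snd_eq_or_eq_of_touch (hτ : IsMinimalLinkage G E τ) (hn : 2 ≤ n) (i : Fin n)
    (h : (τ i).1 = (τ (i + 1)).1 ∨ G.Adj (τ i).1 (τ (i + 1)).1) :
    (τ i).2 = (τ i).1 ∨ (τ i).2 = (τ (i + 1)).1 := by
  have hle := hτ.window_le hn (hτ.isLinkage i).1 (hτ.isLinkage (i + 1)).1 h
  by_contra! hne
  rw [stepCost_self, stepCost_of_ne (Ne.symm hne.1), stepCost_of_ne hne.2] at hle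
  have := stepCost_le_one (τ i).1 (τ (i + 1)).1
  omega

theorem eq_and_eq_of_touch (hτ : IsMinimalLinkage G E τ) (hE : G.IsSeparatedEdgeCycle E)
    (hn : 4 ≤ n) (i : Fin n)
    (h : (τ (i - 1)).2 = (τ (i + 1)).1 ∨ G.Adj (τ (i - 1)).2 (τ (i + 1)).1) :
    (τ (i - 1)).2 = (τ i).1 ∧ (τ i).2 = (τ (i + 1)).1 := by
  have hle := hτ.window_le (by omega) (hτ.isLinkage.snd_pred_mem i) (hτ.isLinkage (i + 1)).1 h
  rw [stepCost_self, stepCost_self] at hle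
  have := stepCost_le_one (τ (i - 1)).2 (τ (i + 1)).1
  refine ⟨by_contra fun h₁ => ?_, by_contra fun h₃ => ?_⟩
  · rw [stepCost_of_ne h₁] at hle
    exact hτ.isLinkage.not_stay_stay hE hn i
      ⟨stepCost_eq_zero.1 (by omega), stepCost_eq_zero.1 (by omega)⟩
  · rw [stepCost_of_ne h₃] at hle
    exact hτ.isLinkage.not_stay_stay_pred hE hn i
      ⟨stepCost_eq_zero.1 (by omega), stepCost_eq_zero.1 (by omega)⟩

end IsMinimalLinkage

/-- The walk `y₋₁ x₀ y₀ x₁ y₁ …` traced by a linkage `τ i = (xᵢ, yᵢ)`, so that times `2i` and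
`2i + 1` lie on `E i`. -/
def linkageWalk (τ : Fin n → V × V) (t : ℕ) : V :=
  if Even t then (τ ((t / 2 : ℕ) - 1)).2 else (τ (t / 2 : ℕ)).1

@[simp] theorem linkageWalk_two_mul (τ : Fin n → V × V) (i : ℕ) :
    linkageWalk τ (2 * i) = (τ (i - 1)).2 := by
  simp [linkageWalk]

@[simp] theorem linkageWalk_two_mul_add_one (τ : Fin n → V × V) (i : ℕ) :
    linkageWalk τ (2 * i + 1) = (τ i).1 := by
  simp [linkageWalk, Nat.mul_add_div]

@[simp] theorem linkageWalk_two_mul_add_two (τ : Fin n → V × V) (i : ℕ) :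
    linkageWalk τ (2 * i + 2) = (τ i).2 := by
  rw [show 2 * i + 2 = 2 * (i + 1) by ring, linkageWalk_two_mul]
  simp

@[simp] theorem linkageWalk_two_mul_add_three (τ : Fin n → V × V) (i : ℕ) :
    linkageWalk τ (2 * i + 3) = (τ (i + 1)).1 := by
  rw [show 2 * i + 3 = 2 * (i + 1) + 1 by ring, linkageWalk_two_mul_add_one]
  simp

@[simp] theorem linkageWalk_two_mul_add_four (τ : Fin n → V × V) (i : ℕ) :
    linkageWalk τ (2 * i + 4) = (τ (i + 1)).2 := by
  rw [show 2 * i + 4 = 2 * (i + 1) + 2 by ring, linkageWalk_two_mul_add_two]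
  simp

theorem linkageWalk_add_two_mul (τ : Fin n → V × V) (t : ℕ) :
    linkageWalk τ (t + 2 * n) = linkageWalk τ t := by
  obtain ⟨i, rfl | rfl⟩ := Nat.even_or_odd' t
  · rw [← mul_add]
    simp
  · rw [add_right_comm, ← mul_add]
    simp

theorem IsLinkage.linkageWalk_mem (hτ : IsLinkage G E τ) (t : ℕ) :
    linkageWalk τ t ∈ E (t / 2 : ℕ) := by
  obtain ⟨i, rfl | rfl⟩ := Nat.even_or_odd' t
  · simpa using hτ.snd_pred_mem i
  · simpa [Nat.mul_add_div] using (hτ i).1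

theorem IsMinimalLinkage.isLazyHole (hτ : IsMinimalLinkage G E τ)
    (hE : G.IsSeparatedEdgeCycle E) (hn : 4 ≤ n) : G.IsLazyHole (2 * n) (linkageWalk τ) where
  periodic := linkageWalk_add_two_mul τ
  touch_succ t := by
    obtain ⟨i, rfl | rfl⟩ := Nat.even_or_odd' t
    · simpa using hτ.isLinkage.touch_snd_pred_fst hE i
    · simpa [add_assoc] using (hτ.isLinkage i).2.2
  not_stay_stay t := by
    obtain ⟨i, rfl | rfl⟩ := Nat.even_or_odd' t
    · simpa using hτ.isLinkage.not_stay_stay_pred hE hn i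
    · simpa [add_assoc] using hτ.isLinkage.not_stay_stay hE hn i
  stay_of_touch_two t := by
    obtain ⟨i, rfl | rfl⟩ := Nat.even_or_odd' t
    · simpa using hτ.fst_eq_or_eq_of_touch (by omega) i
    · simpa [add_assoc] using hτ.snd_eq_or_eq_of_touch (by omega) i
  stays_of_touch_three t := by
    obtain ⟨i, rfl | rfl⟩ := Nat.even_or_odd' t
    · simpa using hτ.eq_and_eq_of_touch hE hn i
    · intro h
      exact absurd (by simpa [add_assoc] using h) (hτ.isLinkage.not_touch_fst_snd_succ hE hn i)
  not_touch t d hd hdn := by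
    have hx := hτ.isLinkage.linkageWalk_mem t
    have hy := hτ.isLinkage.linkageWalk_mem (t + d)
    rw [show (t + d) / 2 = t / 2 + ((t + d) / 2 - t / 2) by omega, Nat.cast_add] at hy
    exact hE.not_touch _ _ (by omega) (by omega) _ hx _ hy

theorem IsSeparatedEdgeCycle.exists_hasInducedCycle (hE : G.IsSeparatedEdgeCycle E)
    (hn : 4 ≤ n) : ∃ m, 4 ≤ m ∧ G.HasInducedCycle m := by
  obtain ⟨τ, hτ⟩ := hE.exists_isMinimalLinkage
  exact (hτ.isLazyHole hE hn).exists_hasInducedCycle (by omega)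

end EdgeCycle

end SimpleGraph

/-- If G is chordal then $L(G)^2$ is chordal. -/
theorem chordal_lineGraph_sq_chordal {V : Type*} (G : SimpleGraph V)
    (hG : G.Chordal) : (G.lineGraph.square).Chordal := by
  rintro n hn ⟨φ⟩
  have : NeZero n := ⟨by omega⟩
  obtain ⟨m, hm, hcycle⟩ :=
    (isSeparatedEdgeCycle_of_embedding (by omega) φ).exists_hasInducedCycle hn
  exact hG m hm hcycle
end

section
/- Every tree-cograph has no induced cycle of length greater than four. -/
open SimpleGraph

/-- Tree-cographs: trees, complements of tree-cographs, and disjoint unions of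
tree-cographs. -/
inductive TreeCograph : {V : Type} → SimpleGraph V → Prop
  | tree {V : Type} [Fintype V] (G : SimpleGraph V) : G.IsTree → TreeCograph G
  | compl {V : Type} (G : SimpleGraph V) : TreeCograph G → TreeCograph Gᶜ
  | union {V W : Type} (G : SimpleGraph V) (H : SimpleGraph W) :
      TreeCograph G → TreeCograph H → TreeCograph (G ⊕g H)

/-!
For `n ≥ 5`, both `Cₙ` and its complement are connected and contain a cycle (the complement
is `(n - 3)`-regular). For any graph `A` with this property, no tree-cograph contains `A` as an
induced subgraph: trees have no cycles, complementation swaps the roles of `A` and `Aᶜ`, and a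
connected induced subgraph of a disjoint union lies inside one of the summands.
-/

namespace SimpleGraph

variable {V W : Type*}

theorem Reachable.isLeft_eq_of_sum {G : SimpleGraph V} {H : SimpleGraph W} {x y : V ⊕ W}
    (h : (G ⊕g H).Reachable x y) : x.isLeft = y.isLeft := by
  rcases x with v | w <;> rcases y with v' | w'
  · rfl
  · exact absurd h (not_reachable_sum_inl_inr v w')
  · exact absurd h.symm (not_reachable_sum_inl_inr v' w)
  · rfl

def Embedding.sumLeft {U : Type*} {A : SimpleGraph U} {G : SimpleGraph V} {H : SimpleGraph W}
    (f : A ↪g G ⊕g H) (hf : ∀ a, (f a).isLeft) : A ↪g G where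
  toFun a := (f a).getLeft (hf a)
  inj' a b hab := f.injective <| by
    rw [← Sum.inl_getLeft (f a) (hf a), ← Sum.inl_getLeft (f b) (hf b)]
    exact congrArg Sum.inl hab
  map_rel_iff' {a b} := by
    change G.Adj ((f a).getLeft (hf a)) ((f b).getLeft (hf b)) ↔ A.Adj a b
    rw [← sum_adj_inl (H := H), Sum.inl_getLeft, Sum.inl_getLeft, f.map_adj_iff]

theorem Preconnected.isIndContained_sum {U : Type*} {A : SimpleGraph U} {G : SimpleGraph V}
    {H : SimpleGraph W} (hA : A.Preconnected) (h : A ⊴ G ⊕g H) : A ⊴ G ∨ A ⊴ H := by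
  obtain ⟨f⟩ := h
  have hside (a b : U) : (f a).isLeft = (f b).isLeft := ((hA a b).map f.toHom).isLeft_eq_of_sum
  by_cases hleft : ∀ a, (f a).isLeft
  · exact .inl ⟨f.sumLeft hleft⟩
  · obtain ⟨a₀, ha₀⟩ := not_forall.mp hleft
    refine .inr ⟨(Iso.sumComm.toEmbedding.comp f).sumLeft fun a => ?_⟩
    change (f a).swap.isLeft
    rw [Sum.isLeft_swap, ← Sum.isLeft_eq_false, hside a a₀]
    exact Bool.eq_false_iff.mpr ha₀

theorem IsRegularOfDegree.not_isAcyclic [Fintype V] {G : SimpleGraph V} [DecidableRel G.Adj]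
    {d : ℕ} (hconn : G.Connected) (hreg : G.IsRegularOfDegree d) (hd : 2 ≤ d) :
    ¬G.IsAcyclic := by
  intro hacyc
  obtain ⟨v⟩ := hconn.nonempty
  obtain ⟨w, hvw⟩ := (G.degree_pos_iff_exists_adj v).mp (by rw [hreg.degree_eq]; omega)
  have : Nontrivial V := ⟨⟨v, w, hvw.ne⟩⟩
  have := IsTree.minDegree_eq_one_of_nontrivial ⟨hconn, hacyc⟩
  rw [hreg.minDegree_eq] at this
  omega

theorem preconnected_compl_of_two_mul_maxDegree_lt [Fintype V] {G : SimpleGraph V}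
    [DecidableRel G.Adj] (h : 2 * G.maxDegree < Fintype.card V) : Gᶜ.Preconnected := by
  classical
  intro u v
  by_cases huv : G.Adj u v
  -- `u` and `v` have at most `2 * maxDegree` neighbours in total, so some vertex is adjacent
  -- to neither of them in `G`.
  · have hcard : (G.neighborFinset u ∪ G.neighborFinset v).card < Finset.univ.card :=
      calc _ ≤ G.degree u + G.degree v := Finset.card_union_le _ _
        _ ≤ 2 * G.maxDegree := by linarith [G.degree_le_maxDegree u, G.degree_le_maxDegree v]
        _ < _ := h
    obtain ⟨w, -, hw⟩ := Finset.exists_mem_notMem_of_card_lt_card hcard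
    simp only [Finset.mem_union, mem_neighborFinset, not_or] at hw
    have huw : Gᶜ.Adj u w := ⟨fun h => hw.2 (h ▸ huv.symm), hw.1⟩
    have hwv : Gᶜ.Adj w v := ⟨fun h => hw.1 (h ▸ huv), fun h => hw.2 h.symm⟩
    exact huw.reachable.trans hwv.reachable
  · obtain rfl | hne := eq_or_ne u v
    · rfl
    · exact Adj.reachable ⟨hne, huv⟩

theorem cycleGraph_not_isAcyclic {n : ℕ} (hn : 3 ≤ n) : ¬(cycleGraph n).IsAcyclic := by
  obtain ⟨m, rfl⟩ : ∃ m, n = m + 3 := ⟨n - 3, by omega⟩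
  exact fun h => h _ cycleGraph.isCycle_cycle

theorem cycleGraph_isRegularOfDegree_two {n : ℕ} (hn : 3 ≤ n) :
    (cycleGraph n).IsRegularOfDegree 2 := by
  obtain ⟨m, rfl⟩ : ∃ m, n = m + 3 := ⟨n - 3, by omega⟩
  exact fun _ => cycleGraph_degree_three_le

theorem compl_cycleGraph_preconnected {n : ℕ} (hn : 5 ≤ n) :
    (cycleGraph n)ᶜ.Preconnected := by
  have : Nonempty (Fin n) := ⟨⟨0, by omega⟩⟩
  apply preconnected_compl_of_two_mul_maxDegree_lt
  rw [(cycleGraph_isRegularOfDegree_two (by omega)).maxDegree_eq, Fintype.card_fin]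
  omega

theorem compl_cycleGraph_not_isAcyclic {n : ℕ} (hn : 5 ≤ n) :
    ¬(cycleGraph n)ᶜ.IsAcyclic := by
  have : Nonempty (Fin n) := ⟨⟨0, by omega⟩⟩
  refine IsRegularOfDegree.not_isAcyclic ⟨compl_cycleGraph_preconnected hn⟩
    (cycleGraph_isRegularOfDegree_two (by omega)).compl ?_
  rw [Fintype.card_fin]
  omega

end SimpleGraph

theorem TreeCograph.not_isIndContained {V : Type} {G : SimpleGraph V} (hG : TreeCograph G)
    {W : Type*} {A : SimpleGraph W} (hA : A.Preconnected ∧ ¬A.IsAcyclic)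
    (hAc : Aᶜ.Preconnected ∧ ¬Aᶜ.IsAcyclic) : ¬A ⊴ G := by
  induction hG generalizing A with
  | tree G hT => exact fun ⟨f⟩ => hA.2 (hT.isAcyclic.embedding f)
  | compl G _ ih =>
    intro h
    refine ih hAc (by rwa [compl_compl]) ?_
    rwa [← compl_isIndContained_compl, compl_compl]
  | union G H _ _ ihG ihH =>
    exact fun h => (hA.1.isIndContained_sum h).elim (ihG hA hAc) (ihH hA hAc)

/-- Tree-cographs have no induced cycles of length more than four. -/
theorem treeCograph_no_long_induced_cycle {V : Type} (G : SimpleGraph V)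
    (hG : TreeCograph G) : ∀ n, 4 < n → ¬ G.HasInducedCycle n := fun _ hn =>
  hG.not_isIndContained ⟨cycleGraph_preconnected, cycleGraph_not_isAcyclic (by omega)⟩
    ⟨compl_cycleGraph_preconnected hn, compl_cycleGraph_not_isAcyclic hn⟩
end

section
/- The complement of a tree (on any finite vertex set) has no induced cycle of length greater than four. -/
/-!
An induced `n`-cycle in `Tᶜ` is an induced copy of `(cycleGraph n)ᶜ` in `T`. For `n ≥ 5` the
vertices `0, 2, 4, 1, 3` form a cycle in `(cycleGraph n)ᶜ`, which the acyclic `T` cannot contain.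
-/

open SimpleGraph

namespace SimpleGraph

theorem cycleGraph_adj_iff_val_s5 {n : ℕ} (hn : 2 ≤ n) {u v : Fin n} :
    (cycleGraph n).Adj u v ↔ u.val + 1 = v.val ∨ v.val + 1 = u.val ∨
      (u.val = 0 ∧ v.val + 1 = n) ∨ (v.val = 0 ∧ u.val + 1 = n) := by
  rw [cycleGraph_adj']
  rcases lt_trichotomy u v with h | rfl | h
  · rw [Fin.coe_sub_iff_lt.mpr h, Fin.coe_sub_iff_le.mpr h.le]
    have := v.isLt
    rw [Fin.lt_def] at h
    omega
  · rw [Fin.sub_val_of_le le_rfl]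
    omega
  · rw [Fin.coe_sub_iff_lt.mpr h, Fin.coe_sub_iff_le.mpr h.le]
    have := u.isLt
    rw [Fin.lt_def] at h
    omega

/-- `k ↦ 2k` maps the pentagon onto its complement, and no two of `0, …, 4` but consecutive ones
are adjacent in a longer cycle. -/
def pentagonHomComplCycleGraph {n : ℕ} (hn : 5 ≤ n) : cycleGraph 5 →g (cycleGraph n)ᶜ where
  toFun k := ⟨2 * k.val % 5, by omega⟩
  map_rel' {k l} hkl := by
    have hdoubled : ∀ k l : Fin 5, (cycleGraph 5).Adj k l → 2 * k.val % 5 ≠ 2 * l.val % 5 ∧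
        2 * k.val % 5 + 1 ≠ 2 * l.val % 5 ∧ 2 * l.val % 5 + 1 ≠ 2 * k.val % 5 ∧
        ¬(2 * k.val % 5 = 0 ∧ 2 * l.val % 5 = 4) ∧ ¬(2 * l.val % 5 = 0 ∧ 2 * k.val % 5 = 4) := by
      decide
    rw [compl_adj, Ne, Fin.ext_iff, cycleGraph_adj_iff_val_s5 (by omega)]
    dsimp only
    have := hdoubled k l hkl
    omega

theorem injective_pentagonHomComplCycleGraph {n : ℕ} (hn : 5 ≤ n) :
    Function.Injective (pentagonHomComplCycleGraph hn) := by
  have hdoubled : ∀ k l : Fin 5, 2 * k.val % 5 = 2 * l.val % 5 → k = l := by decide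
  exact fun k l hkl => hdoubled k l (congrArg Fin.val hkl)

theorem not_isAcyclic_compl_cycleGraph {n : ℕ} (hn : 5 ≤ n) : ¬ (cycleGraph n)ᶜ.IsAcyclic :=
  fun h => h.comap _ (injective_pentagonHomComplCycleGraph hn) _ (cycleGraph.isCycle_cycle (n := 2))

end SimpleGraph

theorem tree_compl_no_long_induced_cycle_general {V : Type*}
    (T : SimpleGraph V) (hT : T.IsTree) :
    ∀ n, 4 < n → ¬ (Tᶜ).HasInducedCycle n := by
  rintro n hn ⟨f⟩
  have hcompl : (cycleGraph n)ᶜ ↪g T := compl_compl T ▸ Embedding.complEquiv f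
  exact not_isAcyclic_compl_cycleGraph hn (hT.isAcyclic.embedding hcompl)

/-- The complement of a finite tree has no induced cycle of length more than four. -/
theorem tree_compl_no_long_induced_cycle {V : Type*} [Fintype V]
    (T : SimpleGraph V) (hT : T.IsTree) :
    ∀ n, 4 < n → ¬ (Tᶜ).HasInducedCycle n :=
  tree_compl_no_long_induced_cycle_general T hT
end

section
/- Let T be a tree. Then L(complement of T)^2 is a complete graph; that is, for any two non-edges {a,b} and {p,q} of T, the corresponding vertices of L(complement of T) are at distance at most 2. -/
open SimpleGraph

/-!
Let `{a, b}` and `{p, q}` be distinct non-edges of the tree `T`. If they share a vertex they are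
adjacent in `L(Tᶜ)`. Otherwise some pair `x ∈ {a, b}`, `y ∈ {p, q}` is a non-edge of `T`, since
otherwise `a p b q` would be a 4-cycle in `T`; then `{x, y}` is a common neighbour of both in `L(Tᶜ)`.
-/

namespace SimpleGraph

variable {V : Type*} {G : SimpleGraph V}

lemma IsAcyclic.eq_of_adj_of_adj (hG : G.IsAcyclic) {a b x y : V} (hab : a ≠ b)
    (hax : G.Adj a x) (hxb : G.Adj x b) (hay : G.Adj a y) (hyb : G.Adj y b) : x = y := by
  have hx : (Walk.cons hax (Walk.cons hxb .nil)).IsPath := by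
    simp [Walk.isPath_def, hax.ne, hxb.ne, hab]
  have hy : (Walk.cons hay (Walk.cons hyb .nil)).IsPath := by
    simp [Walk.isPath_def, hay.ne, hyb.ne, hab]
  have hpath := (hG.subsingleton_path a b).elim ⟨_, hx⟩ ⟨_, hy⟩
  simpa using congrArg (fun w : G.Path a b => w.1.getVert 1) hpath

lemma IsAcyclic.exists_not_adj (hG : G.IsAcyclic) {a b p q : V} (hab : a ≠ b) (hpq : p ≠ q) :
    ∃ x ∈ s(a, b), ∃ y ∈ s(p, q), ¬ G.Adj x y := by
  by_contra! h
  exact hpq <| hG.eq_of_adj_of_adj hab (h a (by simp) p (by simp)) (h b (by simp) p (by simp)).symm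
    (h a (by simp) q (by simp)) (h b (by simp) q (by simp)).symm

lemma lineGraph_adj_of_mem {e f : G.edgeSet} (hef : e ≠ f) {v : V}
    (he : v ∈ (e : Sym2 V)) (hf : v ∈ (f : Sym2 V)) : G.lineGraph.Adj e f :=
  lineGraph_adj_iff_exists.2 ⟨hef, v, he, hf⟩

theorem IsAcyclic.square_lineGraph_compl_adj (hG : G.IsAcyclic) {e f : Gᶜ.edgeSet}
    (hef : e ≠ f) : Gᶜ.lineGraph.square.Adj e f := by
  refine ⟨hef, ?_⟩
  by_cases hshared : ∃ v, v ∈ (e : Sym2 V) ∧ v ∈ (f : Sym2 V)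
  · exact Or.inl (lineGraph_adj_iff_exists.2 ⟨hef, hshared⟩)
  push Not at hshared
  obtain ⟨e, he⟩ := e
  obtain ⟨f, hf⟩ := f
  induction e using Sym2.ind with | _ a b =>
  induction f using Sym2.ind with | _ p q =>
  obtain ⟨x, hx, y, hy, hxy⟩ := hG.exists_not_adj ((mem_edgeSet _).1 he).ne ((mem_edgeSet _).1 hf).ne
  let g : Gᶜ.edgeSet := ⟨s(x, y), (compl_adj G x y).2 ⟨fun h => hshared x hx (h ▸ hy), hxy⟩⟩
  have heg : ⟨s(a, b), he⟩ ≠ g := fun h =>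
    hshared y (congrArg Subtype.val h ▸ Sym2.mem_mk_right x y) hy
  have hgf : g ≠ ⟨s(p, q), hf⟩ := fun h =>
    hshared x hx (congrArg Subtype.val h ▸ Sym2.mem_mk_left x y)
  exact Or.inr ⟨g, lineGraph_adj_of_mem heg hx (Sym2.mem_mk_left x y),
    lineGraph_adj_of_mem hgf (Sym2.mem_mk_right x y) hy⟩

end SimpleGraph

theorem lineGraph_compl_tree_sq_complete_general {V : Type*}
    (T : SimpleGraph V) (hT : T.IsTree) :
    ∀ e f : (Tᶜ).edgeSet, e ≠ f → ((Tᶜ).lineGraph.square).Adj e f :=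
  fun _ _ => hT.isAcyclic.square_lineGraph_compl_adj

/-- For a finite tree T, $L(\overline{T})^2$ is complete: any two distinct non-edges
of T are at distance at most 2 in $L(\overline{T})$. -/
theorem lineGraph_compl_tree_sq_complete {V : Type*} [Fintype V]
    (T : SimpleGraph V) (hT : T.IsTree) :
    ∀ e f : (Tᶜ).edgeSet, e ≠ f → ((Tᶜ).lineGraph.square).Adj e f :=
  lineGraph_compl_tree_sq_complete_general T hT
end

section
/- If T is a tree, then L(T)^2 is strongly chordal, i.e., chordal and containing no induced k-sun for any k ≥ 3. -/
open SimpleGraph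

/-- The k-sun: a clique $c_1,…,c_k$ (the `Sum.inl` vertices) together with an
independent set $s_1,…,s_k$ (the `Sum.inr` vertices), where $s_i$ is adjacent
exactly to $c_i$ and $c_{i+1}$ (indices mod k). -/
def sunGraph (k : ℕ) : SimpleGraph (Fin k ⊕ Fin k) where
  Adj x y := match x, y with
    | Sum.inl i, Sum.inl j => i ≠ j
    | Sum.inl i, Sum.inr j => i.val = j.val ∨ i.val = (j.val + 1) % k
    | Sum.inr i, Sum.inl j => j.val = i.val ∨ j.val = (i.val + 1) % k
    | Sum.inr _, Sum.inr _ => False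
  symm := ⟨by
    rintro (i | i) (j | j) h
    · exact Ne.symm h
    · exact h
    · exact h
    · exact h⟩
  loopless := ⟨by
    rintro (i | i) h
    · exact h rfl
    · exact h⟩

/-- A graph is strongly chordal if it is chordal and has no induced k-sun, k ≥ 3. -/
def StronglyChordal {α : Type*} (G : SimpleGraph α) : Prop :=
  G.Chordal ∧ ∀ k, 3 ≤ k → IsEmpty (sunGraph k ↪g G)

/-!
Root `T` at `r` and call `p` the parent of `u` when `u` and `p` are adjacent and `p` is closer
to `r`. Two edges are adjacent in `L(T)²` iff an endpoint of one equals or is adjacent to an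
endpoint of the other. Among finitely many edges take one, `s(u, p)`, whose child endpoint `u` is
deepest, and let `q` be the parent of `p`. Every other edge near `s(u, p)` contains `p` or `q`, so
`s(u, p)` is simplicial. An edge `f` near `s(u, p)` that is near some edge `h` far from `s(u, p)`
contains `q`, and `h` is then near `q` unless `f` joins `q` to its parent; as at most one edge does,
the closed neighbourhoods of the neighbours of `s(u, p)` form a chain, i.e. `s(u, p)` is a simple
vertex. No vertex of a cycle of length at least 4 or of a sun is simple.
-/

namespace SimpleGraph

variable {V : Type*} {G : SimpleGraph V}

def closedNeighborSet (G : SimpleGraph V) (v : V) : Set V := insert v (G.neighborSet v)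

@[simp]
lemma mem_closedNeighborSet {v w : V} : w ∈ G.closedNeighborSet v ↔ w = v ∨ G.Adj v w :=
  Iff.rfl

lemma Adj.mem_closedNeighborSet {v w : V} (h : G.Adj v w) : w ∈ G.closedNeighborSet v :=
  Or.inr h

def IsSimpleVertex (G : SimpleGraph V) (v : V) : Prop :=
  ∀ ⦃u⦄, u ∈ G.closedNeighborSet v → ∀ ⦃w⦄, w ∈ G.closedNeighborSet v →
    G.closedNeighborSet u ⊆ G.closedNeighborSet w ∨ G.closedNeighborSet w ⊆ G.closedNeighborSet u

lemma IsSimpleVertex.adj {v u w : V} (hv : G.IsSimpleVertex v) (hu : G.Adj v u) (hw : G.Adj v w)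
    (huw : u ≠ w) : G.Adj u w := by
  rcases hv (Or.inr hu) (Or.inr hw) with h | h
  · exact ((h (Set.mem_insert u _)).resolve_left huw).symm
  · exact (h (Set.mem_insert w _)).resolve_left huw.symm

lemma closedNeighborSet_subset_of_simplicial {v w : V}
    (hsimp : ∀ ⦃j k⦄, G.Adj v j → G.Adj v k → j ≠ k → G.Adj j k)
    (hw : w ∈ G.closedNeighborSet v) : G.closedNeighborSet v ⊆ G.closedNeighborSet w := by
  rcases hw with rfl | hvw
  · rfl
  rintro x (rfl | hvx)
  · exact Or.inr hvw.symm
  · by_cases hxw : x = w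
    · exact Or.inl hxw
    · exact Or.inr (hsimp hvw hvx (Ne.symm hxw))

lemma isSimpleVertex_of_simplicial {v : V}
    (hsimp : ∀ ⦃j k⦄, G.Adj v j → G.Adj v k → j ≠ k → G.Adj j k)
    (hexch : ∀ ⦃j k l l'⦄, G.Adj v j → G.Adj v k → j ≠ k → G.Adj j l → G.Adj k l' →
      l ∉ G.closedNeighborSet v → l' ∉ G.closedNeighborSet v →
      l ∈ G.closedNeighborSet k ∨ l' ∈ G.closedNeighborSet j) :
    G.IsSimpleVertex v := by
  have hsub := fun {w} => closedNeighborSet_subset_of_simplicial (w := w) hsimp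
  intro j hj k hk
  rcases hj with rfl | hvj
  · exact Or.inl (hsub hk)
  rcases hk with rfl | hvk
  · exact Or.inr (hsub (Or.inr hvj))
  by_cases hjk : j = k
  · subst hjk
    exact Or.inl subset_rfl
  by_contra! hne
  obtain ⟨l, hlj, hlk⟩ := Set.not_subset.mp hne.1
  obtain ⟨l', hl'k, hl'j⟩ := Set.not_subset.mp hne.2
  have hl : l ∉ G.closedNeighborSet v := fun h => hlk (hsub (Or.inr hvk) h)
  have hl' : l' ∉ G.closedNeighborSet v := fun h => hl'j (hsub (Or.inr hvj) h)
  have hjl : G.Adj j l := hlj.resolve_left fun h => hlk (h ▸ Or.inr (hsimp hvk hvj (Ne.symm hjk)))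
  have hkl' : G.Adj k l' := hl'k.resolve_left fun h => hl'j (h ▸ Or.inr (hsimp hvj hvk hjk))
  exact (hexch hvj hvk hjk hjl hkl' hl hl').elim hlk hl'j

end SimpleGraph

lemma sunGraph_adj_inl_inr {k : ℕ} [NeZero k] {i j : Fin k} :
    (sunGraph k).Adj (Sum.inl i) (Sum.inr j) ↔ i = j ∨ i = j + 1 := by
  simp [sunGraph, Fin.ext_iff, Fin.val_add]

open Fin.CommRing in
lemma cycleGraph_not_isSimpleVertex {n : ℕ} (hn : 4 ≤ n) (i : Fin n) :
    ¬(cycleGraph n).IsSimpleVertex i := by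
  obtain ⟨m, rfl⟩ : ∃ m, n = m + 2 + 2 := ⟨n - 4, by omega⟩
  have h3 : (3 : Fin (m + 2 + 2)) ≠ 0 := by
    simp [Fin.ext_iff, Nat.mod_eq_of_lt (show 3 < m + 2 + 2 by omega)]
  have h2 : (2 : Fin (m + 2 + 2)) ≠ 0 := by
    simp [Fin.ext_iff, Nat.mod_eq_of_lt (show 2 < m + 2 + 2 by omega)]
  intro hi
  have := hi.adj (u := i - 1) (w := i + 1) (by simp [cycleGraph_adj]) (by simp [cycleGraph_adj])
    (fun h => h2 (by linear_combination -h))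
  rw [cycleGraph_adj] at this
  rcases this with h | h
  · exact h3 (by linear_combination -h)
  · exact one_ne_zero (by linear_combination h : (1 : Fin (m + 2 + 2)) = 0)

open Fin.CommRing in
lemma sunGraph_not_isSimpleVertex {k : ℕ} (hk : 3 ≤ k) (x : Fin k ⊕ Fin k) :
    ¬(sunGraph k).IsSimpleVertex x := by
  obtain ⟨K, rfl⟩ : ∃ K, k = K + 3 := ⟨k - 3, by omega⟩
  have h2 : (2 : Fin (K + 3)) ≠ 0 := by
    simp [Fin.ext_iff, Nat.mod_eq_of_lt (show 2 < K + 3 by omega)]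
  intro hx
  rcases x with i | m
  · exact hx.adj (u := Sum.inr (i - 1)) (w := Sum.inr i) (sunGraph_adj_inl_inr.mpr (by simp))
      (sunGraph_adj_inl_inr.mpr (by simp)) (by simp)
  · have hadj : ∀ j, (sunGraph (K + 3)).Adj (Sum.inr m) (Sum.inl j) ↔ j = m ∨ j = m + 1 :=
      fun j => ((sunGraph _).adj_comm _ _).trans sunGraph_adj_inl_inr
    rcases hx ((hadj m).mpr (Or.inl rfl)).mem_closedNeighborSet
      ((hadj (m + 1)).mpr (Or.inr rfl)).mem_closedNeighborSet with h | h
    · have := h (sunGraph_adj_inl_inr.mpr (Or.inr (sub_add_cancel m 1).symm)).mem_closedNeighborSet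
      simp only [mem_closedNeighborSet, reduceCtorEq, false_or, sunGraph_adj_inl_inr] at this
      rcases this with h' | h'
      · exact h2 (by linear_combination h')
      · exact one_ne_zero (by linear_combination h' : (1 : Fin (K + 3)) = 0)
    · have := h (sunGraph_adj_inl_inr.mpr (Or.inl rfl) :
        (sunGraph _).Adj _ (Sum.inr (m + 1))).mem_closedNeighborSet
      simp only [mem_closedNeighborSet, reduceCtorEq, false_or, sunGraph_adj_inl_inr] at this
      rcases this with h' | h'
      · exact one_ne_zero (by linear_combination -h' : (1 : Fin (K + 3)) = 0)
      · exact h2 (by linear_combination -h')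

lemma stronglyChordal_of_forall_exists_isSimpleVertex {V : Type*} {G : SimpleGraph V}
    (h : ∀ {ι : Type} [Finite ι] [Nonempty ι] {H : SimpleGraph ι}, (H ↪g G) →
      ∃ i, H.IsSimpleVertex i) :
    StronglyChordal G := by
  refine ⟨fun n hn ⟨φ⟩ => ?_, fun k hk => ⟨fun φ => ?_⟩⟩
  · have : Nonempty (Fin n) := ⟨⟨0, by omega⟩⟩
    obtain ⟨i, hi⟩ := h φ
    exact cycleGraph_not_isSimpleVertex hn i hi
  · have : Nonempty (Fin k ⊕ Fin k) := ⟨Sum.inl ⟨0, by omega⟩⟩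
    obtain ⟨x, hx⟩ := h φ
    exact sunGraph_not_isSimpleVertex hk x hx

lemma Sym2.exists_mem_forall_mem_le {α ι β : Type*} [Finite ι] [Nonempty ι] [LinearOrder β]
    (e : ι → Sym2 α) (d : α → β) : ∃ i₀, ∃ u ∈ e i₀, ∀ i, ∀ v ∈ e i, d v ≤ d u := by
  let dmax : Sym2 α → β := Sym2.lift ⟨fun a b => max (d a) (d b), fun _ _ => max_comm _ _⟩
  have hle : ∀ z, ∀ v ∈ z, d v ≤ dmax z := Sym2.ind fun a b v hv => by
    rcases Sym2.mem_iff.mp hv with rfl | rfl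
    · exact le_max_left _ _
    · exact le_max_right _ _
  have hattained : ∀ z, ∃ u ∈ z, dmax z = d u := Sym2.ind fun a b =>
    (le_total (d a) (d b)).elim (fun h => ⟨b, Sym2.mem_mk_right a b, max_eq_right h⟩)
      (fun h => ⟨a, Sym2.mem_mk_left a b, max_eq_left h⟩)
  obtain ⟨i₀, hi₀⟩ := Finite.exists_max (dmax ∘ e)
  obtain ⟨u, hu, hdu⟩ := hattained (e i₀)
  exact ⟨i₀, u, hu, fun i v hv => (hle _ v hv).trans ((hi₀ i).trans hdu.le)⟩

namespace SimpleGraph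

variable {V : Type*} {G T : SimpleGraph V}

def Near (G : SimpleGraph V) (e f : Sym2 V) : Prop :=
  ∃ a ∈ e, ∃ b ∈ f, a = b ∨ G.Adj a b

lemma Near.symm {e f : Sym2 V} (h : G.Near e f) : G.Near f e := by
  obtain ⟨a, ha, b, hb, hab⟩ := h
  exact ⟨b, hb, a, ha, hab.imp Eq.symm Adj.symm⟩

lemma lineGraph_square_adj_iff_s10 {e f : G.edgeSet} :
    G.lineGraph.square.Adj e f ↔ e ≠ f ∧ G.Near e f := by
  refine ⟨fun ⟨hne, h⟩ => ⟨hne, ?_⟩, fun ⟨hne, a, ha, b, hb, hab⟩ => ⟨hne, ?_⟩⟩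
  · rcases h with h | ⟨g, heg, hgf⟩
    · obtain ⟨-, x, hxe, hxf⟩ := lineGraph_adj_iff_exists.mp h
      exact ⟨x, hxe, x, hxf, Or.inl rfl⟩
    · obtain ⟨-, x, hxe, hxg⟩ := lineGraph_adj_iff_exists.mp heg
      obtain ⟨-, y, hyg, hyf⟩ := lineGraph_adj_iff_exists.mp hgf
      refine ⟨x, hxe, y, hyf, or_iff_not_imp_left.mpr fun hxy => ?_⟩
      rw [← G.mem_edgeSet, ← Sym2.mem_and_mem_iff hxy |>.mp ⟨hxg, hyg⟩]
      exact g.2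
  rcases hab with rfl | hab
  · exact Or.inl (lineGraph_adj_iff_exists.mpr ⟨hne, a, ha, hb⟩)
  let g : G.edgeSet := ⟨s(a, b), hab⟩
  by_cases hge : g = e
  · exact Or.inl (lineGraph_adj_iff_exists.mpr ⟨hne, b, hge ▸ Sym2.mem_mk_right a b, hb⟩)
  by_cases hgf : g = f
  · exact Or.inl (lineGraph_adj_iff_exists.mpr ⟨hne, a, ha, hgf ▸ Sym2.mem_mk_left a b⟩)
  exact Or.inr ⟨g, lineGraph_adj_iff_exists.mpr ⟨Ne.symm hge, a, ha, Sym2.mem_mk_left a b⟩,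
    lineGraph_adj_iff_exists.mpr ⟨hgf, b, Sym2.mem_mk_right a b, hb⟩⟩

lemma exists_eq_mk_of_mem_edgeSet {f : Sym2 V} (hf : f ∈ G.edgeSet) {a : V} (ha : a ∈ f) :
    ∃ c, f = s(a, c) ∧ G.Adj a c := by
  obtain ⟨c, rfl⟩ := Sym2.mem_iff_exists.mp ha
  exact ⟨c, rfl, hf⟩

lemma IsTree.eq_of_adj_of_dist_le (hT : T.IsTree) (r : V) {a c w : V} (hac : T.Adj a c)
    (hc : T.dist r c ≤ T.dist r a) (haw : T.Adj a w) (hw : T.dist r w ≤ T.dist r a) : c = w := by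
  classical
  obtain ⟨p, hp, hpl⟩ := hT.connected.exists_path_of_dist r a
  have hparent : ∀ {x}, T.Adj a x → T.dist r x ≤ T.dist r a → x = p.penultimate := by
    intro x hax hx
    have hx : T.dist r x < T.dist r a := by
      have := hT.dist_eq_dist_add_one_of_adj r hax; omega
    obtain ⟨q, hq, hql⟩ := hT.connected.exists_path_of_dist r x
    have ha : a ∉ q.support := fun ha => by
      have := T.dist_le (q.takeUntil a ha)
      have := q.length_takeUntil_le_length ha
      omega
    exact hT.isAcyclic.eq_penultimate_of_adj_end hp hax
      (hT.isAcyclic.mem_support_of_ne_mem_support_of_adj_of_isPath hp hq hax ha)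
  rw [hparent hac hc, hparent haw hw]

/-- The edges of `T` with both endpoints at distance at most `n` from `r`. -/
def edgeSetInBall (T : SimpleGraph V) (r : V) (n : ℕ) : Set (Sym2 V) :=
  {e | e ∈ T.edgeSet ∧ ∀ v ∈ e, T.dist r v ≤ n}

lemma IsTree.exists_eq_or_adj_of_near_child (hT : T.IsTree) (r : V) {q x : V}
    (hqx : T.Adj q x) (hx : T.dist r q < T.dist r x) {h : Sym2 V}
    (hh : h ∈ T.edgeSetInBall r (T.dist r x + 1)) (hn : T.Near h s(q, x)) :
    ∃ a ∈ h, a = q ∨ T.Adj a q := by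
  obtain ⟨a, ha, b, hb, hab⟩ := hn
  rcases Sym2.mem_iff.mp hb with rfl | rfl
  · exact ⟨a, ha, hab⟩
  rcases hab with rfl | hab
  · exact ⟨a, ha, Or.inr hqx.symm⟩
  rcases hT.dist_eq_dist_add_one_of_adj r hab with had | had
  · obtain ⟨c, rfl, hac⟩ := exists_eq_mk_of_mem_edgeSet hh.1 ha
    obtain rfl : c = b :=
      hT.eq_of_adj_of_dist_le r hac (by have := hh.2 c (by simp); omega) hab (by omega)
    exact ⟨c, by simp, Or.inr hqx.symm⟩
  · exact ⟨a, ha, Or.inl (hT.eq_of_adj_of_dist_le r hab.symm (by omega) hqx.symm hx.le)⟩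

lemma IsTree.mem_or_parent_mem_of_near (hT : T.IsTree) (r : V) {u p : V} (hup : T.Adj u p)
    (hp : T.dist r p < T.dist r u) {f : Sym2 V} (hf : f ∈ T.edgeSetInBall r (T.dist r u))
    (hfe : f ≠ s(u, p)) (hn : T.Near f s(u, p)) :
    p ∈ f ∨ ∃ q ∈ f, T.Adj p q ∧ T.dist r q < T.dist r p := by
  obtain ⟨a, ha, b, hb, hab⟩ := hn
  rcases Sym2.mem_iff.mp hb with rfl | rfl
  · rcases hab with rfl | hab
    · obtain ⟨c, rfl, hac⟩ := exists_eq_mk_of_mem_edgeSet hf.1 ha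
      obtain rfl := hT.eq_of_adj_of_dist_le r hac (hf.2 c (by simp)) hup hp.le
      exact absurd rfl hfe
    · obtain rfl := hT.eq_of_adj_of_dist_le r hab.symm (hf.2 a ha) hup hp.le
      exact Or.inl ha
  · rcases hab with rfl | hab
    · exact Or.inl ha
    have hup' := hT.dist_eq_dist_add_one_of_adj r hup
    rcases hT.dist_eq_dist_add_one_of_adj r hab with had | had
    · obtain ⟨c, rfl, hac⟩ := exists_eq_mk_of_mem_edgeSet hf.1 ha
      obtain rfl := hT.eq_of_adj_of_dist_le r hac (by have := hf.2 c (by simp); omega)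
        hab (by omega)
      exact Or.inl (by simp)
    · exact Or.inr ⟨a, ha, hab.symm, by omega⟩

lemma IsTree.near_of_near_of_near (hT : T.IsTree) (r : V) {u p : V} (hup : T.Adj u p)
    (hp : T.dist r p < T.dist r u) {f g : Sym2 V} (hf : f ∈ T.edgeSetInBall r (T.dist r u))
    (hg : g ∈ T.edgeSetInBall r (T.dist r u)) (hfe : f ≠ s(u, p)) (hge : g ≠ s(u, p))
    (hfn : T.Near f s(u, p)) (hgn : T.Near g s(u, p)) : T.Near f g := by
  rcases hT.mem_or_parent_mem_of_near r hup hp hf hfe hfn with hpf | ⟨q, hqf, hpq, hq⟩ <;>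
    rcases hT.mem_or_parent_mem_of_near r hup hp hg hge hgn with hpg | ⟨q', hqg, hpq', hq'⟩
  · exact ⟨p, hpf, p, hpg, Or.inl rfl⟩
  · exact ⟨p, hpf, q', hqg, Or.inr hpq'⟩
  · exact ⟨q, hqf, p, hpg, Or.inr hpq.symm⟩
  · obtain rfl := hT.eq_of_adj_of_dist_le r hpq hq.le hpq' hq'.le
    exact ⟨q, hqf, q, hqg, Or.inl rfl⟩

lemma IsTree.exists_parent_mem_of_near_of_not_near (hT : T.IsTree) (r : V) {u p : V}
    (hup : T.Adj u p) (hp : T.dist r p < T.dist r u) {f h : Sym2 V}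
    (hf : f ∈ T.edgeSetInBall r (T.dist r u)) (hfe : f ≠ s(u, p)) (hfn : T.Near f s(u, p))
    (hh : h ∈ T.edgeSetInBall r (T.dist r u)) (hhn : ¬T.Near h s(u, p)) (hhf : T.Near h f) :
    ∃ q ∈ f, T.Adj p q ∧ T.dist r q < T.dist r p ∧
      ((∃ a ∈ h, a = q ∨ T.Adj a q) ∨ ∀ v ∈ f, T.dist r v ≤ T.dist r q) := by
  have hup' := hT.dist_eq_dist_add_one_of_adj r hup
  rcases hT.mem_or_parent_mem_of_near r hup hp hf hfe hfn with hpf | ⟨q, hqf, hpq, hq⟩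
  · obtain ⟨c, rfl, hpc⟩ := exists_eq_mk_of_mem_edgeSet hf.1 hpf
    rcases hT.dist_eq_dist_add_one_of_adj r hpc with hc | hc
    · refine ⟨c, by simp, hpc, by omega, Or.inl ?_⟩
      refine hT.exists_eq_or_adj_of_near_child r hpc.symm (by omega) ?_ (Sym2.eq_swap ▸ hhf)
      exact ⟨hh.1, fun v hv => (hh.2 v hv).trans (by omega)⟩
    · obtain ⟨a, ha, hap⟩ := hT.exists_eq_or_adj_of_near_child r hpc (by omega)
        ⟨hh.1, fun v hv => (hh.2 v hv).trans (by omega)⟩ hhf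
      exact absurd ⟨a, ha, p, by simp, hap⟩ hhn
  · obtain ⟨x, rfl, hqx⟩ := exists_eq_mk_of_mem_edgeSet hf.1 hqf
    have hpq' := hT.dist_eq_dist_add_one_of_adj r hpq
    refine ⟨q, hqf, hpq, hq, ?_⟩
    rcases hT.dist_eq_dist_add_one_of_adj r hqx with hx | hx
    · refine Or.inr ?_
      simp only [Sym2.mem_iff, forall_eq_or_imp, forall_eq]
      exact ⟨le_rfl, by omega⟩
    · exact Or.inl (hT.exists_eq_or_adj_of_near_child r hqx (by omega)
        ⟨hh.1, fun v hv => (hh.2 v hv).trans (by omega)⟩ hhf)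

lemma IsTree.near_or_near_of_not_near (hT : T.IsTree) (r : V) {u p : V} (hup : T.Adj u p)
    (hp : T.dist r p < T.dist r u) {f g h h' : Sym2 V}
    (hf : f ∈ T.edgeSetInBall r (T.dist r u)) (hg : g ∈ T.edgeSetInBall r (T.dist r u))
    (hh : h ∈ T.edgeSetInBall r (T.dist r u)) (hh' : h' ∈ T.edgeSetInBall r (T.dist r u))
    (hfe : f ≠ s(u, p)) (hge : g ≠ s(u, p)) (hfg : f ≠ g)
    (hfn : T.Near f s(u, p)) (hgn : T.Near g s(u, p))
    (hhn : ¬T.Near h s(u, p)) (hh'n : ¬T.Near h' s(u, p))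
    (hhf : T.Near h f) (hh'g : T.Near h' g) : T.Near h g ∨ T.Near h' f := by
  obtain ⟨q, hqf, hpq, hq, hfq⟩ :=
    hT.exists_parent_mem_of_near_of_not_near r hup hp hf hfe hfn hh hhn hhf
  obtain ⟨q', hqg, hpq', hq', hgq⟩ :=
    hT.exists_parent_mem_of_near_of_not_near r hup hp hg hge hgn hh' hh'n hh'g
  obtain rfl := hT.eq_of_adj_of_dist_le r hpq hq.le hpq' hq'.le
  rcases hfq with ⟨a, ha, haq⟩ | hfq
  · exact Or.inl ⟨a, ha, q, hqg, haq⟩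
  rcases hgq with ⟨a, ha, haq⟩ | hgq
  · exact Or.inr ⟨a, ha, q, hqf, haq⟩
  obtain ⟨x, rfl, hqx⟩ := exists_eq_mk_of_mem_edgeSet hf.1 hqf
  obtain ⟨y, rfl, hqy⟩ := exists_eq_mk_of_mem_edgeSet hg.1 hqg
  obtain rfl := hT.eq_of_adj_of_dist_le r hqx (hfq x (by simp)) hqy (hgq y (by simp))
  exact absurd rfl hfg

theorem IsTree.exists_isSimpleVertex_of_embedding (hT : T.IsTree) {ι : Type*} [Finite ι]
    [Nonempty ι] {H : SimpleGraph ι} (φ : H ↪g T.lineGraph.square) : ∃ i, H.IsSimpleVertex i := by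
  obtain ⟨r⟩ := hT.connected.nonempty
  set e : ι → Sym2 V := fun i => φ i
  have hadj : ∀ {i j}, H.Adj i j ↔ i ≠ j ∧ T.Near (e i) (e j) := by
    intro i j
    rw [← φ.map_adj_iff, lineGraph_square_adj_iff_s10, φ.injective.ne_iff]
  have hmem : ∀ {k l}, T.Near (e l) (e k) → l ∈ H.closedNeighborSet k := fun h =>
    (eq_or_ne _ _).imp id fun hne => hadj.mpr ⟨hne.symm, h.symm⟩
  obtain ⟨i₀, u, hu, hmax⟩ := Sym2.exists_mem_forall_mem_le e (T.dist r)
  have hball : ∀ i, e i ∈ T.edgeSetInBall r (T.dist r u) := fun i => ⟨(φ i).2, hmax i⟩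
  obtain ⟨p, hi₀, hup⟩ := exists_eq_mk_of_mem_edgeSet (hball i₀).1 hu
  have hp : T.dist r p < T.dist r u := by
    have := hT.dist_eq_dist_add_one_of_adj r hup
    have := hmax i₀ p (hi₀ ▸ Sym2.mem_mk_right u p)
    omega
  have hnbr : ∀ {j}, H.Adj i₀ j → e j ≠ s(u, p) ∧ T.Near (e j) s(u, p) := fun hj => by
    obtain ⟨hne, hn⟩ := hadj.mp hj
    rw [← hi₀]
    exact ⟨fun h => hne (φ.injective (Subtype.ext h.symm)), hn.symm⟩
  have hfar : ∀ {l}, l ∉ H.closedNeighborSet i₀ → ¬T.Near (e l) s(u, p) := fun hl hn =>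
    hl (hmem (hi₀ ▸ hn))
  refine ⟨i₀, isSimpleVertex_of_simplicial (fun j k hj hk hjk => ?_)
    (fun j k l l' hj hk hjk hjl hkl' hl hl' => ?_)⟩
  · exact hadj.mpr ⟨hjk, hT.near_of_near_of_near r hup hp (hball j) (hball k) (hnbr hj).1
      (hnbr hk).1 (hnbr hj).2 (hnbr hk).2⟩
  · have hjk' : e j ≠ e k := fun h => hjk (φ.injective (Subtype.ext h))
    exact (hT.near_or_near_of_not_near r hup hp (hball j) (hball k) (hball l) (hball l')
      (hnbr hj).1 (hnbr hk).1 hjk' (hnbr hj).2 (hnbr hk).2 (hfar hl) (hfar hl')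
      (hadj.mp hjl).2.symm (hadj.mp hkl').2.symm).imp hmem hmem

end SimpleGraph

/-- If T is a tree then $L(T)^2$ is strongly chordal. -/
theorem tree_lineGraph_sq_stronglyChordal {V : Type*} (T : SimpleGraph V)
    (hT : T.IsTree) : StronglyChordal (T.lineGraph.square) :=
  stronglyChordal_of_forall_exists_isSimpleVertex hT.exists_isSimpleVertex_of_embedding
end

section
/- A connected chordal graph is ptolemaic if and only if for every pair of maximal cliques C_1, C_2 with nonempty intersection, C_1 ∩ C_2 separates C_1 \ C_2 from C_2 \ C_1. -/
open SimpleGraph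

/-- A graph is distance-hereditary if distances in connected induced subgraphs
agree with distances in the whole graph. -/
def DistHereditary {α : Type*} (G : SimpleGraph α) : Prop :=
  ∀ s : Set α, (G.induce s).Connected → ∀ u v : s, (G.induce s).dist u v = G.dist u v

/-- s is a maximal clique of G. -/
def IsMaximalClique {α : Type*} (G : SimpleGraph α) (s : Set α) : Prop :=
  G.IsClique s ∧ ∀ t, G.IsClique t → s ⊆ t → t = s

/-- S separates A from B: every walk from A to B meets S. -/
def Separates {α : Type*} (G : SimpleGraph α) (S A B : Set α) : Prop :=
  ∀ a ∈ A, ∀ b ∈ B, ∀ p : G.Walk a b, ∃ x ∈ S, x ∈ p.support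

/-!
Distance-heredity amounts to every induced path being a shortest path. In a chordal graph with
the clique-separation property, an induced path `v₀ … vₙ` is shown to be shortest by induction on
`d(v₀, vₙ)`: let `w` be the second vertex of a shortest path from `v₀` to `vₙ`. By chordality the
neighbours of `w` on the path form an initial segment `v₀ … vⱼ`, and `j ≤ 2` because otherwise
`w, v₀, …, v₃` is a gem, whose triangles `w v₀ v₁` and `w v₂ v₃` lie in maximal cliques that are
not separated across the edge `v₁ v₂`. Then `w, vⱼ, …, vₙ` is an induced path with closer ends.

Conversely, in a distance-hereditary graph the ends of an induced `P₄` have no common neighbour.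
If a walk from `C₁ \ C₂` to `C₂ \ C₁` avoided `C₁ ∩ C₂ ∋ x`, distance-heredity on its vertex set
yields a path of length at most two between its ends that still avoids `C₁ ∩ C₂`; extending it by
vertices of `C₁` or `C₂` non-adjacent to it gives a chordless 4-cycle or an induced `P₄` whose ends
are both adjacent to `x`.
-/

def seqCons {α : Type*} (a : α) (f : ℕ → α) : ℕ → α
  | 0 => a
  | k + 1 => f k

@[simp] lemma seqCons_zero {α : Type*} (a : α) (f : ℕ → α) : seqCons a f 0 = a := rfl

@[simp] lemma seqCons_succ {α : Type*} (a : α) (f : ℕ → α) (k : ℕ) :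
    seqCons a f (k + 1) = f k := rfl

namespace SimpleGraph

variable {V W : Type*} {G : SimpleGraph V}

lemma cycleGraph_adj_iff_val_s12 {n : ℕ} {a b : Fin (n + 2)} :
    (cycleGraph (n + 2)).Adj a b ↔ a.val + 1 = b.val ∨ b.val + 1 = a.val ∨
      (a.val = 0 ∧ b.val = n + 1) ∨ (b.val = 0 ∧ a.val = n + 1) := by
  have succ_mod (x : ℕ) (hx : x < n + 2) :
      (1 + x) % (n + 2) = 0 ∧ x = n + 1 ∨ (1 + x) % (n + 2) = x + 1 ∧ x < n + 1 := by
    rcases (by omega : x = n + 1 ∨ x < n + 1) with rfl | h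
    · left; simp [show 1 + (n + 1) = n + 2 by omega]
    · right; rw [Nat.mod_eq_of_lt (by omega)]; omega
  rw [cycleGraph_adj, sub_eq_iff_eq_add, sub_eq_iff_eq_add, Fin.ext_iff, Fin.ext_iff,
    Fin.val_add, Fin.val_add, Fin.val_one]
  have := succ_mod a a.isLt
  have := succ_mod b b.isLt
  omega

lemma Walk.dist_getVert_getVert {u v : V} {p : G.Walk u v} (hp : p.length = G.dist u v)
    {i j : ℕ} (hij : i ≤ j) (hj : j ≤ p.length) :
    G.dist (p.getVert i) (p.getVert j) = j - i := by
  have hsub : ((p.take j).drop i).IsSubwalk p :=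
    (Walk.isSubwalk_drop _ i).trans (p.isSubwalk_take j)
  have := length_eq_dist_of_subwalk hp hsub
  rw [Walk.drop_length, Walk.take_length, Walk.take_getVert, min_eq_left hj,
    min_eq_right hij] at this
  exact this.symm

/-- `v 0, v 1, …, v n` are, in this order, the vertices of an induced path of `G`; the values of
`v` beyond `n` play no role. -/
structure IsInducedPath (G : SimpleGraph V) (v : ℕ → V) (n : ℕ) : Prop where
  injOn : Set.InjOn v (Set.Iic n)
  adj_iff {i j : ℕ} : i ≤ n → j ≤ n → (G.Adj (v i) (v j) ↔ i + 1 = j ∨ j + 1 = i)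

namespace IsInducedPath

variable {v : ℕ → V} {n : ℕ}

lemma adj_succ (hP : G.IsInducedPath v n) {i : ℕ} (hi : i < n) : G.Adj (v i) (v (i + 1)) :=
  (hP.adj_iff hi.le hi).2 (Or.inl rfl)

lemma ne (hP : G.IsInducedPath v n) {i j : ℕ} (hi : i ≤ n) (hj : j ≤ n) (hij : i ≠ j) :
    v i ≠ v j :=
  fun h => hij (hP.injOn hi hj h)

lemma mono (hP : G.IsInducedPath v n) {m : ℕ} (hm : m ≤ n) : G.IsInducedPath v m :=
  ⟨hP.injOn.mono (Set.Iic_subset_Iic.2 hm), fun hi hj => hP.adj_iff (hi.trans hm) (hj.trans hm)⟩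

lemma drop (hP : G.IsInducedPath v n) {i : ℕ} (hi : i ≤ n) :
    G.IsInducedPath (fun k => v (i + k)) (n - i) where
  injOn a ha b hb h := by
    have := hP.injOn (x₁ := i + a) (x₂ := i + b) (by simp at ha ⊢; omega)
      (by simp at hb ⊢; omega) h
    omega
  adj_iff ha hb := by rw [hP.adj_iff (by omega) (by omega)]; omega

lemma injOn_seqCons (hP : G.IsInducedPath v n) {w : V} (hw : ∀ k ≤ n, v k ≠ w) :
    Set.InjOn (seqCons w v) (Set.Iic (n + 1)) := by
  rintro (_ | a) ha (_ | b) hb h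
  · rfl
  · exact absurd h.symm (hw b (by simp at hb; omega))
  · exact absurd h (hw a (by simp at ha; omega))
  · simp only [seqCons_succ] at h
    rw [hP.injOn (by simp at ha ⊢; omega) (by simp at hb ⊢; omega) h]

lemma cons (hP : G.IsInducedPath v n) {w : V} (hw : ∀ k ≤ n, v k ≠ w)
    (hadj : ∀ k ≤ n, G.Adj w (v k) ↔ k = 0) : G.IsInducedPath (seqCons w v) (n + 1) where
  injOn := hP.injOn_seqCons hw
  adj_iff {i j} hi hj := by
    rcases i with _ | i <;> rcases j with _ | j
    · simp
    · simp only [seqCons_zero, seqCons_succ, hadj j (by omega)]; omega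
    · simp only [seqCons_zero, seqCons_succ, adj_comm _ (v i), hadj i (by omega)]; omega
    · simp only [seqCons_succ, hP.adj_iff (by omega : i ≤ n) (by omega : j ≤ n)]; omega

lemma reachable (hP : G.IsInducedPath v n) : G.Reachable (v 0) (v n) := by
  induction n with
  | zero => rfl
  | succ n ih => exact (ih (hP.mono n.le_succ)).trans (hP.adj_succ n.lt_succ_self).reachable

lemma map {G' : SimpleGraph W} (hP : G.IsInducedPath v n) (f : G ↪g G') :
    G'.IsInducedPath (f ∘ v) n where
  injOn := f.injective.comp_injOn hP.injOn
  adj_iff hi hj := by simp only [Function.comp_apply, f.map_adj_iff, hP.adj_iff hi hj]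

lemma of_length_eq_dist {u v : V} (p : G.Walk u v) (hp : p.length = G.dist u v) :
    G.IsInducedPath p.getVert p.length where
  injOn := (p.isPath_of_length_eq_dist hp).getVert_injOn
  adj_iff {i j} hi hj := by
    refine ⟨fun h => ?_, ?_⟩
    · have h1 := dist_eq_one_iff_adj.2 h
      rcases le_total i j with hij | hij
      · have := Walk.dist_getVert_getVert hp hij hj; omega
      · have := Walk.dist_getVert_getVert hp hij hi; rw [dist_comm] at h1; omega
    · rintro (rfl | rfl)
      · exact p.adj_getVert_succ (by omega)
      · exact (p.adj_getVert_succ (by omega)).symm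

end IsInducedPath

theorem Chordal.exists_adj_of_adj_ends (hch : G.Chordal) {v : ℕ → V} {m : ℕ}
    (hP : G.IsInducedPath v m) (hm : 2 ≤ m) {w : V} (hw : ∀ k ≤ m, v k ≠ w)
    (h₀ : G.Adj w (v 0)) (hₘ : G.Adj w (v m)) : ∃ k, 0 < k ∧ k < m ∧ G.Adj w (v k) := by
  by_contra! hinner
  have hadj (k : ℕ) (hk : k ≤ m) : G.Adj w (v k) ↔ k = 0 ∨ k = m := by
    refine ⟨fun h => ?_, by rintro (rfl | rfl) <;> assumption⟩
    by_contra! hk'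
    exact hinner k (by omega) (by omega) h
  -- then `w, v 0, …, v m` is an induced cycle of length `m + 2 ≥ 4`
  have hcycle : ∀ k ≤ m + 1, ∀ l ≤ m + 1, G.Adj (seqCons w v k) (seqCons w v l) ↔
      k + 1 = l ∨ l + 1 = k ∨ (k = 0 ∧ l = m + 1) ∨ (l = 0 ∧ k = m + 1) := by
    rintro (_ | k) hk (_ | l) hl
    · simp
    · simp only [seqCons_zero, seqCons_succ, hadj l (by omega), true_and]; omega
    · rw [adj_comm]
      simp only [seqCons_zero, seqCons_succ, hadj k (by omega), true_and]; omega
    · simp only [seqCons_succ, hP.adj_iff (by omega : k ≤ m) (by omega : l ≤ m)]; omega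
  refine hch (m + 2) (by omega) ⟨⟨⟨fun k => seqCons w v k, fun a b h => ?_⟩, ?_⟩⟩
  · exact Fin.ext (hP.injOn_seqCons hw (by simp; omega) (by simp; omega) h)
  · intro a b
    rw [cycleGraph_adj_iff_val_s12]
    exact hcycle a (by omega) b (by omega)

theorem Chordal.adj_between_of_adj (hch : G.Chordal) {v : ℕ → V} {n : ℕ}
    (hP : G.IsInducedPath v n) {w : V} (hw : ∀ k ≤ n, v k ≠ w) {i j k : ℕ}
    (hi : G.Adj w (v i)) (hj : G.Adj w (v j)) (hik : i ≤ k) (hkj : k ≤ j) (hjn : j ≤ n) :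
    G.Adj w (v k) := by
  induction hd : j - i using Nat.strong_induction_on generalizing i j with
  | _ d ih =>
  by_cases hji : j ≤ i + 1
  · obtain rfl | rfl : k = i ∨ k = j := by omega
    exacts [hi, hj]
  obtain ⟨l, hl₀, hlt, hl⟩ :=
    hch.exists_adj_of_adj_ends ((hP.mono hjn).drop (hik.trans hkj)) (by omega)
      (fun l hl => hw _ (by omega)) (by simpa using hi)
      (by simpa [Nat.add_sub_cancel' (hik.trans hkj)] using hj)
  rcases le_total k (i + l) with hk | hk
  · exact ih l (by omega) hi hl hik hk (by omega) (by omega)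
  · exact ih (j - (i + l)) (by omega) hl hj hk hkj hjn rfl

theorem Chordal.adj_mid_of_adj_ends (hch : G.Chordal) {a b c d : V} (hab : G.Adj a b)
    (hbc : G.Adj b c) (hac : ¬ G.Adj a c) (hac' : a ≠ c) (hda : G.Adj d a) (hdc : G.Adj d c)
    (hdb : d ≠ b) : G.Adj d b := by
  have hP : G.IsInducedPath (seqCons a (seqCons b fun _ => c)) 2 := by
    refine ⟨fun i hi j hj h => ?_, fun {i j} hi hj => ?_⟩
    · simp only [Set.mem_Iic] at hi hj
      interval_cases i <;> interval_cases j <;>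
        simp_all [seqCons, hab.ne, hbc.ne, hab.ne.symm, hbc.ne.symm, hac'.symm]
    · interval_cases i <;> interval_cases j <;>
        simp [seqCons, hab, hbc, hab.symm, hbc.symm, hac, G.adj_comm c a]
  obtain ⟨k, hk₀, hk₂, hk⟩ := hch.exists_adj_of_adj_ends hP le_rfl
    (fun k hk => by interval_cases k <;> simp [seqCons, hda.ne', hdc.ne', hdb.symm])
    hda hdc
  obtain rfl : k = 1 := by omega
  exact hk

lemma isClique_triple {x a b : V} (hxa : G.Adj x a) (hxb : G.Adj x b)
    (hab : G.Adj a b) : G.IsClique {x, a, b} := by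
  refine isClique_insert.2 ⟨isClique_pair.2 fun _ => hab, ?_⟩
  simp only [Set.mem_insert_iff, Set.mem_singleton_iff]
  rintro _ (rfl | rfl) _ <;> assumption

theorem IsClique.exists_isMaximalClique {s : Set V} (hs : G.IsClique s) :
    ∃ C, IsMaximalClique G C ∧ s ⊆ C := by
  obtain ⟨C, hsC, hC⟩ := zorn_subset_nonempty {t | G.IsClique t}
    (fun c hc hchain _ => ⟨⋃₀ c, (isClique_sUnion hchain.directedOn).2 hc,
      fun _ => Set.subset_sUnion_of_mem⟩) s hs
  exact ⟨C, ⟨hC.prop, fun t ht hCt => (hC.eq_of_subset ht hCt).symm⟩, hsC⟩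

end SimpleGraph

section

variable {V : Type*} {G : SimpleGraph V}

theorem IsMaximalClique.exists_not_adj {C : Set V} (hC : IsMaximalClique G C) {a : V}
    (ha : a ∉ C) : ∃ c ∈ C, a ≠ c ∧ ¬ G.Adj a c := by
  by_contra! h
  have := hC.2 (insert a C) (isClique_insert.2 ⟨hC.1, h⟩) (Set.subset_insert a C)
  exact ha (this ▸ Set.mem_insert a C)

def HasCliqueSeparation (G : SimpleGraph V) : Prop :=
  ∀ C₁ C₂ : Set V, IsMaximalClique G C₁ → IsMaximalClique G C₂ → (C₁ ∩ C₂).Nonempty →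
    Separates G (C₁ ∩ C₂) (C₁ \ C₂) (C₂ \ C₁)

namespace HasCliqueSeparation

theorem not_forall_adj (hsep : HasCliqueSeparation G) {v : ℕ → V} (hP : G.IsInducedPath v 3)
    (x : V) : ¬ ∀ k ≤ 3, G.Adj x (v k) := by
  intro hx
  obtain ⟨C₁, hC₁, h₁⟩ := (isClique_triple (hx 0 (by omega)) (hx 1 (by omega))
    (hP.adj_succ (by omega))).exists_isMaximalClique
  obtain ⟨C₂, hC₂, h₂⟩ := (isClique_triple (hx 2 (by omega)) (hx 3 (by omega))
    (hP.adj_succ (by omega))).exists_isMaximalClique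
  have h₁₂ : v 1 ∉ C₂ := fun h => by
    have := (hP.adj_iff (i := 1) (j := 3) (by omega) le_rfl).1
      (hC₂.1 h (h₂ (by simp)) (hP.ne (by omega) le_rfl (by omega)))
    omega
  have h₂₁ : v 2 ∉ C₁ := fun h => by
    have := (hP.adj_iff (i := 2) (j := 0) (by omega) (by omega)).1
      (hC₁.1 h (h₁ (by simp)) (hP.ne (by omega) (by omega) (by omega)))
    omega
  obtain ⟨y, hy, hys⟩ := hsep C₁ C₂ hC₁ hC₂ ⟨x, h₁ (by simp), h₂ (by simp)⟩
    (v 1) ⟨h₁ (by simp), h₁₂⟩ (v 2) ⟨h₂ (by simp), h₂₁⟩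
    (hP.adj_succ (i := 1) (by omega)).toWalk
  simp only [Adj.toWalk, Walk.support_cons, Walk.support_nil, List.mem_cons, List.not_mem_nil,
    or_false] at hys
  rcases hys with rfl | rfl
  exacts [h₁₂ hy.2, h₂₁ hy.1]

theorem le_dist_of_isInducedPath (hsep : HasCliqueSeparation G) (hch : G.Chordal)
    {v : ℕ → V} {n : ℕ} (hP : G.IsInducedPath v n) : n ≤ G.dist (v 0) (v n) := by
  induction hd : G.dist (v 0) (v n) using Nat.strong_induction_on generalizing v n with
  | _ d ih =>
  classical
  rcases Nat.eq_zero_or_pos n with rfl | hn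
  · exact Nat.zero_le _
  obtain ⟨q, hq⟩ := hP.reachable.exists_walk_length_eq_dist
  have hq₀ : ¬ q.Nil := fun h => hP.ne n.zero_le le_rfl hn.ne h.eq
  obtain ⟨w, hw₀, hwd⟩ : ∃ w, G.Adj (v 0) w ∧ G.dist w (v n) < d := by
    refine ⟨q.snd, q.adj_snd hq₀, ?_⟩
    have := dist_le q.tail
    have := q.length_tail_add_one hq₀
    omega
  by_cases hwP : ∃ k ≤ n, v k = w
  · obtain ⟨k, hk, hkw⟩ := hwP
    obtain rfl : k = 1 := by
      have := (hP.adj_iff n.zero_le hk).1 (hkw ▸ hw₀)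
      omega
    have := ih _ hwd (hP.drop hk) (by simp [hkw, Nat.add_sub_cancel' hk])
    omega
  push Not at hwP
  set j := Nat.findGreatest (fun k => G.Adj w (v k)) n
  have hj : G.Adj w (v j) :=
    Nat.findGreatest_spec (P := fun k => G.Adj w (v k)) n.zero_le hw₀.symm
  have hjn : j ≤ n := Nat.findGreatest_le n
  have hj₂ : j ≤ 2 := by
    by_contra! h
    -- by chordality `w` is adjacent to all of `v 0, …, v j`, so `w, v 0, …, v 3` would be a gem
    exact hsep.not_forall_adj (hP.mono (by omega)) w fun k hk =>
      hch.adj_between_of_adj hP hwP hw₀.symm hj k.zero_le (by omega) hjn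
  have hQ := (hP.drop hjn).cons (w := w) (fun k _ => hwP _ (by omega)) fun k hk =>
    ⟨fun h => by
      by_contra hk₀
      exact Nat.findGreatest_is_greatest (P := fun k => G.Adj w (v k)) (n := n) (k := j + k)
        (by omega) (by omega) h,
    by rintro rfl; simpa using hj⟩
  have := ih _ hwd hQ (by simp [Nat.add_sub_cancel' hjn])
  omega

theorem distHereditary (hsep : HasCliqueSeparation G) (hch : G.Chordal) : DistHereditary G := by
  intro s hs u v
  obtain ⟨p, hp⟩ := (hs.preconnected u v).exists_walk_length_eq_dist
  have hP := (IsInducedPath.of_length_eq_dist p hp).map (Embedding.induce s)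
  apply le_antisymm
  · rw [← hp]
    simpa using hsep.le_dist_of_isInducedPath hch hP
  · rw [← hp, ← p.length_map (Embedding.induce s).toHom]
    exact dist_le _

end HasCliqueSeparation

namespace DistHereditary

theorem eq_or_adj_or_exists_mem_support (hdh : DistHereditary G) {u v x : V} (W : G.Walk u v)
    (hux : G.Adj u x) (hxv : G.Adj x v) :
    u = v ∨ G.Adj u v ∨ ∃ y ∈ W.support, G.Adj u y ∧ G.Adj y v := by
  set s : Set V := {y | y ∈ W.support}
  have hu : u ∈ s := W.start_mem_support
  have hv : v ∈ s := W.end_mem_support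
  have hdist : (G.induce s).dist ⟨u, hu⟩ ⟨v, hv⟩ ≤ 2 := by
    rw [hdh s W.connected_induce_support]
    simpa using dist_le (Walk.cons hux (Walk.cons hxv Walk.nil))
  have hedist : ¬ 2 < (G.induce s).edist ⟨u, hu⟩ ⟨v, hv⟩ := by
    rw [← (W.connected_induce_support.preconnected _ _).coe_dist_eq_edist]
    exact_mod_cast hdist.not_gt
  by_contra! h
  obtain ⟨huv, hadj, hy⟩ := h
  refine hedist (two_lt_edist_iff.2
    ⟨fun e => huv (congrArg Subtype.val e), by simpa using hadj, ?_⟩)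
  ext y
  simp only [mem_commonNeighbors, comap_adj, Function.Embedding.subtype_apply,
    Set.mem_empty_iff_false, iff_false, not_and]
  exact fun h h' => hy y y.2 h h'.symm

theorem not_adj_of_induced_p4 (hdh : DistHereditary G) {p q r s x : V} (hpq : G.Adj p q)
    (hqr : G.Adj q r) (hrs : G.Adj r s) (hpr : ¬ G.Adj p r) (hqs : ¬ G.Adj q s)
    (hps : ¬ G.Adj p s) (hne : p ≠ s) (hpx : G.Adj p x) : ¬ G.Adj x s := by
  intro hxs
  -- inside the path its ends are at distance three, while `x` puts them at distance two in `G`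
  rcases hdh.eq_or_adj_or_exists_mem_support (.cons hpq (.cons hqr hrs.toWalk)) hpx hxs with
    h | h | ⟨y, hy, hpy, hys⟩
  · exact hne h
  · exact hps h
  · simp only [Adj.toWalk, Walk.support_cons, Walk.support_nil, List.mem_cons,
      List.not_mem_nil, or_false] at hy
    rcases hy with rfl | rfl | rfl | rfl
    exacts [G.loopless.irrefl _ hpy, hqs hys, hpr hpy, G.loopless.irrefl _ hys]

theorem not_adj_of_mem_sdiff (hdh : DistHereditary G) (hch : G.Chordal) {C₁ C₂ : Set V}
    (h₁ : IsMaximalClique G C₁) (h₂ : IsMaximalClique G C₂) {x a b : V} (hx : x ∈ C₁ ∩ C₂)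
    (ha : a ∈ C₁ \ C₂) (hb : b ∈ C₂ \ C₁) : ¬ G.Adj a b := by
  intro hab
  obtain ⟨b', hb', hab', hnab'⟩ := h₂.exists_not_adj ha.2
  obtain ⟨a', ha', hba', hnba'⟩ := h₁.exists_not_adj hb.2
  have ha'C₂ : a' ∉ C₂ := fun h => hnba' (h₂.1 hb.1 h hba')
  have hb'C₁ : b' ∉ C₁ := fun h => hnab' (h₁.1 ha.1 h hab')
  have haa' : G.Adj a' a := h₁.1 ha' ha.1 (by rintro rfl; exact hnba' hab.symm)
  have hbb' : G.Adj b b' := h₂.1 hb.1 hb' (by rintro rfl; exact hnab' hab)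
  by_cases ha'b' : G.Adj a' b'
  · exact hnba' (hch.adj_mid_of_adj_ends hab hbb' hnab' hab' haa' ha'b' hba'.symm).symm
  · exact hdh.not_adj_of_induced_p4 haa' hab hbb' (fun h => hnba' h.symm) hnab' ha'b'
      (fun h => hb'C₁ (h ▸ ha')) (h₁.1 ha' hx.1 fun h => ha'C₂ (h ▸ hx.2))
      (h₂.1 hx.2 hb' fun h => hb'C₁ (h ▸ hx.1))

theorem hasCliqueSeparation (hdh : DistHereditary G) (hch : G.Chordal) :
    HasCliqueSeparation G := by
  rintro C₁ C₂ h₁ h₂ ⟨x, hx⟩ a ha b hb W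
  by_contra! hW
  have hab : ¬ G.Adj a b := hdh.not_adj_of_mem_sdiff hch h₁ h₂ hx ha hb
  have hxa : G.Adj a x := h₁.1 ha.1 hx.1 fun h => ha.2 (h ▸ hx.2)
  have hxb : G.Adj x b := h₂.1 hx.2 hb.1 fun h => hb.2 (h ▸ hx.1)
  rcases hdh.eq_or_adj_or_exists_mem_support W hxa hxb with h | h | ⟨y, hyW, hay, hyb⟩
  · exact hb.2 (h ▸ ha.1)
  · exact hab h
  by_cases hy₁ : y ∈ C₁
  · exact hdh.not_adj_of_mem_sdiff hch h₁ h₂ hx ⟨hy₁, fun hy₂ => hW y ⟨hy₁, hy₂⟩ hyW⟩ hb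
      hyb
  by_cases hy₂ : y ∈ C₂
  · exact hdh.not_adj_of_mem_sdiff hch h₁ h₂ hx ha ⟨hy₂, hy₁⟩ hay
  obtain ⟨a', ha', hya', hnya'⟩ := h₁.exists_not_adj hy₁
  have haa' : G.Adj a' a := h₁.1 ha' ha.1 (by rintro rfl; exact hnya' hay.symm)
  have ha'C₂ : a' ∉ C₂ := fun h => hnya' <| hch.adj_mid_of_adj_ends haa'.symm
    (h₂.1 h hb.1 fun e => hb.2 (e ▸ ha')) hab (fun e => hb.2 (e ▸ ha.1)) hay.symm hyb hya'
  by_cases ha'b : G.Adj a' b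
  · exact hdh.not_adj_of_mem_sdiff hch h₁ h₂ hx ⟨ha', ha'C₂⟩ hb ha'b
  · exact hdh.not_adj_of_induced_p4 haa' hay hyb (fun h => hnya' h.symm) hab ha'b
      (fun e => hb.2 (e ▸ ha')) (h₁.1 ha' hx.1 fun e => ha'C₂ (e ▸ hx.2)) hxb

end DistHereditary

end

theorem ptolemaic_iff_clique_separation_general {V : Type*} (G : SimpleGraph V)
    (hch : G.Chordal) :
    (G.Chordal ∧ DistHereditary G) ↔
      ∀ C₁ C₂ : Set V, IsMaximalClique G C₁ → IsMaximalClique G C₂ →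
        (C₁ ∩ C₂).Nonempty →
        Separates G (C₁ ∩ C₂) (C₁ \ C₂) (C₂ \ C₁) :=
  ⟨fun h => h.2.hasCliqueSeparation hch,
    fun hsep => ⟨hch, HasCliqueSeparation.distHereditary hsep hch⟩⟩

/-- A connected chordal graph is ptolemaic (chordal and distance-hereditary) iff for
every pair of maximal cliques with nonempty intersection, the intersection separates
the rest of one from the rest of the other. -/
theorem ptolemaic_iff_clique_separation {V : Type*} (G : SimpleGraph V)
    (hconn : G.Connected) (hch : G.Chordal) :
    (G.Chordal ∧ DistHereditary G) ↔
      ∀ C₁ C₂ : Set V, IsMaximalClique G C₁ → IsMaximalClique G C₂ →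
        (C₁ ∩ C₂).Nonempty →
        Separates G (C₁ ∩ C₂) (C₁ \ C₂) (C₂ \ C₁) :=
  ptolemaic_iff_clique_separation_general G hch
end

section
/- If T is a tree on n vertices with at least one non-edge, then the strong chromatic index of the complement of T equals C(n,2) - (n-1), the number of non-edges of T. -/
open SimpleGraph

/-!
Two vertices of a tree have at most one common neighbour. So for two disjoint edges `ab`, `cd`
of the complement, some cross pair `xy` with `x ∈ {a, b}`, `y ∈ {c, d}` is a non-edge of the
tree, i.e. an edge of the complement meeting both. Hence any two edges of `Tᶜ` are at distance
at most two in its line graph, the square of the line graph is complete, and its chromatic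
number is the number of edges of `Tᶜ`.
-/

open Finset

namespace SimpleGraph

variable {V : Type*} {G : SimpleGraph V}

theorem IsAcyclic.subsingleton_commonNeighbors (hG : G.IsAcyclic) {a b : V} (hab : a ≠ b) :
    (G.commonNeighbors a b).Subsingleton := by
  rintro c ⟨hac : G.Adj a c, hbc : G.Adj b c⟩ d ⟨had : G.Adj a d, hbd : G.Adj b d⟩
  let path {x : V} (hax : G.Adj a x) (hbx : G.Adj b x) : G.Path a b :=
    ⟨.cons hax (.cons hbx.symm .nil), by simp [hab, hax.ne, hbx.ne.symm]⟩
  have := congrArg (·.1.support) ((hG.subsingleton_path a b).elim (path hac hbc) (path had hbd))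
  simpa [path] using this

theorem card_edgeFinset_compl [Fintype V] [DecidableEq V] [DecidableRel G.Adj] :
    #Gᶜ.edgeFinset = (Fintype.card V).choose 2 - #G.edgeFinset := by
  rw [← card_edgeFinset_top_eq_card_choose_two, ← card_sdiff_of_subset (edgeFinset_mono le_top),
    ← edgeFinset_sdiff]
  congr 1; ext ⟨x, y⟩; simp

theorem square_lineGraph_adj_of_mem {H : SimpleGraph V} {e₁ e₂ : H.edgeSet} (hne : e₁ ≠ e₂)
    {x y : V} (hx : x ∈ (e₁ : Sym2 V)) (hy : y ∈ (e₂ : Sym2 V)) (hxy : x = y ∨ H.Adj x y) :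
    H.lineGraph.square.Adj e₁ e₂ := by
  refine ⟨hne, ?_⟩
  rcases hxy with rfl | hxy
  · exact .inl (lineGraph_adj_iff_exists.2 ⟨hne, x, hx, hy⟩)
  let f : H.edgeSet := ⟨s(x, y), hxy⟩
  by_cases h₁ : f = e₁
  · exact .inl (lineGraph_adj_iff_exists.2 ⟨hne, y, h₁ ▸ Sym2.mem_mk_right x y, hy⟩)
  by_cases h₂ : f = e₂
  · exact .inl (lineGraph_adj_iff_exists.2 ⟨hne, x, hx, h₂ ▸ Sym2.mem_mk_left x y⟩)
  exact .inr ⟨f, lineGraph_adj_iff_exists.2 ⟨Ne.symm h₁, x, hx, Sym2.mem_mk_left x y⟩,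
    lineGraph_adj_iff_exists.2 ⟨h₂, y, Sym2.mem_mk_right x y, hy⟩⟩

theorem IsAcyclic.square_lineGraph_compl_eq_top (hG : G.IsAcyclic) : Gᶜ.lineGraph.square = ⊤ := by
  ext ⟨e₁, he₁⟩ ⟨e₂, he₂⟩
  refine ⟨fun h ↦ h.1, fun hne ↦ ?_⟩
  induction e₁ using Sym2.ind with | _ a b => ?_
  induction e₂ using Sym2.ind with | _ c d => ?_
  obtain ⟨x, hx, y, hy, hxy⟩ : ∃ x ∈ s(a, b), ∃ y ∈ s(c, d), ¬G.Adj x y := by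
    by_contra! h
    simp only [Sym2.mem_iff, forall_eq_or_imp, forall_eq] at h
    exact ((mem_edgeSet _).1 he₂).ne <|
      hG.subsingleton_commonNeighbors ((mem_edgeSet _).1 he₁).ne ⟨h.1.1, h.2.1⟩ ⟨h.1.2, h.2.2⟩
  exact square_lineGraph_adj_of_mem hne hx hy (or_iff_not_imp_left.2 fun h ↦ ⟨h, hxy⟩)

end SimpleGraph

theorem compl_tree_strong_chromatic_index_general {V : Type*} [Fintype V]
    (T : SimpleGraph V) (hT : T.IsTree) :
    ((Tᶜ).lineGraph.square).chromaticNumber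
      = (((Fintype.card V).choose 2 - (Fintype.card V - 1) : ℕ) : ℕ∞) := by
  classical
  have hedges : Fintype.card V - 1 = #T.edgeFinset := by
    have := hT.card_edgeFinset
    omega
  rw [hT.isAcyclic.square_lineGraph_compl_eq_top, chromaticNumber_top, card_edgeSet,
    card_edgeFinset_compl, hedges]

/-- For a tree T on n vertices with at least one non-edge, the strong chromatic index
of the complement of T is $\binom{n}{2} - (n-1)$. -/
theorem compl_tree_strong_chromatic_index {V : Type*} [Fintype V]
    (T : SimpleGraph V) (hT : T.IsTree)
    (hne : ∃ a b : V, a ≠ b ∧ ¬ T.Adj a b) :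
    ((Tᶜ).lineGraph.square).chromaticNumber
      = (((Fintype.card V).choose 2 - (Fintype.card V - 1) : ℕ) : ℕ∞) :=
  compl_tree_strong_chromatic_index_general T hT
end

section
/- If G is the join of graphs G_1 and G_2, each with at least one vertex, then the maximum size of an induced matching in G equals max(iν(G_1), iν(G_2), 1), where iν denotes the maximum induced matching size. -/
/-! In the join every vertex of `G₁` is adjacent to every vertex of `G₂`, so any two distinct
edges of an induced matching have all their endpoints on the same side. Hence an induced matching
of the join with at least two edges lies inside one of the two induced copies of `G₁` and `G₂`,
while a single cross edge is always an induced matching of size `1`. -/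

open SimpleGraph

/-- The join of two graphs: their disjoint union with all cross edges added. -/
def SimpleGraph.join {α β : Type*} (G : SimpleGraph α) (H : SimpleGraph β) :
    SimpleGraph (α ⊕ β) where
  Adj x y := match x, y with
    | Sum.inl a, Sum.inl b => G.Adj a b
    | Sum.inr a, Sum.inr b => H.Adj a b
    | _, _ => True
  symm := ⟨by rintro (a | a) (b | b) h <;> first | exact h.symm | trivial⟩
  loopless := ⟨by rintro (a | a) h <;> exact h.ne rfl⟩

/-- An edge of the join with one endpoint on each side. -/
def crossEdge {α β : Type*} (e : Sym2 (α ⊕ β)) : Prop :=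
  ∃ a b, e = s(Sum.inl a, Sum.inr b)

/-- M is an induced matching of G. -/
def IsInducedMatching {α : Type*} (G : SimpleGraph α) (M : Set (Sym2 α)) : Prop :=
  M ⊆ G.edgeSet ∧
    ∀ e ∈ M, ∀ f ∈ M, e ≠ f → ∀ u ∈ e, ∀ v ∈ f, u ≠ v ∧ ¬ G.Adj u v

/-- The maximum size of an induced matching. -/
noncomputable def indMatchNum {α : Type*} (G : SimpleGraph α) : ℕ :=
  sSup {n | ∃ M : Set (Sym2 α), IsInducedMatching G M ∧ M.Finite ∧ M.ncard = n}

theorem Sym2.mem_range_map_of_forall_mem {α β : Type*} {f : α → β} {e : Sym2 β}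
    (h : ∀ x ∈ e, x ∈ Set.range f) : e ∈ Set.range (Sym2.map f) := by
  induction e using Sym2.ind with
  | _ x y =>
    obtain ⟨a, rfl⟩ := h x (Sym2.mem_mk_left x y)
    obtain ⟨b, rfl⟩ := h _ (Sym2.mem_mk_right _ y)
    exact ⟨s(a, b), Sym2.map_mk f a b⟩

section InducedMatching

variable {V W : Type*} {G : SimpleGraph V} {H : SimpleGraph W} {M : Set (Sym2 W)}

theorem isInducedMatching_singleton {u v : V} (h : G.Adj u v) :
    IsInducedMatching G {s(u, v)} :=
  ⟨Set.singleton_subset_iff.2 h, fun _ he _ hf hne => absurd (he.trans hf.symm) hne⟩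

theorem IsInducedMatching.comap (f : G ↪g H) (hM : IsInducedMatching H M) :
    IsInducedMatching G (Sym2.map f ⁻¹' M) := by
  refine ⟨fun e he => ?_, fun e he e' he' hne u hu v hv => ?_⟩
  · induction e using Sym2.ind with
    | _ a b => exact f.map_adj_iff.1 (hM.1 he)
  · have hne' : Sym2.map f e ≠ Sym2.map f e' := (Sym2.map.injective f.injective).ne hne
    obtain ⟨huv, hadj⟩ := hM.2 _ he _ he' hne' (f u) (Sym2.mem_map.2 ⟨u, hu, rfl⟩)
      (f v) (Sym2.mem_map.2 ⟨v, hv, rfl⟩)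
    exact ⟨fun h => huv (congrArg f h), fun h => hadj (f.map_adj_iff.2 h)⟩

theorem IsInducedMatching.map (f : G ↪g H) {M : Set (Sym2 V)} (hM : IsInducedMatching G M) :
    IsInducedMatching H (Sym2.map f '' M) := by
  refine ⟨?_, ?_⟩
  · rintro _ ⟨e, he, rfl⟩
    induction e using Sym2.ind with
    | _ a b => exact f.map_adj_iff.2 (hM.1 he)
  · rintro _ ⟨e, he, rfl⟩ _ ⟨e', he', rfl⟩ hne _ hx _ hy
    obtain ⟨u, hu, rfl⟩ := Sym2.mem_map.1 hx
    obtain ⟨v, hv, rfl⟩ := Sym2.mem_map.1 hy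
    obtain ⟨huv, hadj⟩ := hM.2 e he e' he' (fun h => hne (h ▸ rfl)) u hu v hv
    exact ⟨f.injective.ne huv, fun h => hadj (f.map_adj_iff.1 h)⟩

variable [Finite V]

theorem bddAbove_setOf_isInducedMatching_ncard (G : SimpleGraph V) :
    BddAbove {n | ∃ M : Set (Sym2 V), IsInducedMatching G M ∧ M.Finite ∧ M.ncard = n} :=
  ⟨Nat.card (Sym2 V), by
    rintro n ⟨M, -, -, rfl⟩
    exact Set.ncard_le_card M⟩

theorem IsInducedMatching.ncard_le_indMatchNum {M : Set (Sym2 V)} (hM : IsInducedMatching G M) :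
    M.ncard ≤ indMatchNum G :=
  le_csSup (bddAbove_setOf_isInducedMatching_ncard G) ⟨M, hM, M.toFinite, rfl⟩

theorem exists_isInducedMatching_ncard_eq_indMatchNum (G : SimpleGraph V) :
    ∃ M : Set (Sym2 V), IsInducedMatching G M ∧ M.ncard = indMatchNum G := by
  refine (Nat.sSup_mem ?_ (bddAbove_setOf_isInducedMatching_ncard G)).imp
    fun M hM => ⟨hM.1, hM.2.2⟩
  exact ⟨0, ∅, ⟨Set.empty_subset _, fun _ he => he.elim⟩, Set.finite_empty, Set.ncard_empty _⟩

theorem indMatchNum_le_of_forall {n : ℕ}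
    (h : ∀ M : Set (Sym2 V), IsInducedMatching G M → M.ncard ≤ n) : indMatchNum G ≤ n := by
  obtain ⟨M, hM, hcard⟩ := exists_isInducedMatching_ncard_eq_indMatchNum G
  exact hcard ▸ h M hM

theorem one_le_indMatchNum_of_adj {u v : V} (h : G.Adj u v) : 1 ≤ indMatchNum G :=
  Set.ncard_singleton s(u, v) ▸ (isInducedMatching_singleton h).ncard_le_indMatchNum

theorem IsInducedMatching.ncard_le_indMatchNum_of_subset_range (f : G ↪g H)
    (hM : IsInducedMatching H M) (hMf : M ⊆ Set.range (Sym2.map f)) :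
    M.ncard ≤ indMatchNum G := by
  rw [← Set.ncard_preimage_of_injective_subset_range (Sym2.map.injective f.injective) hMf]
  exact (hM.comap f).ncard_le_indMatchNum

variable [Finite W]

theorem indMatchNum_le_of_embedding (f : G ↪g H) : indMatchNum G ≤ indMatchNum H := by
  obtain ⟨M, hM, hcard⟩ := exists_isInducedMatching_ncard_eq_indMatchNum G
  rw [← hcard, ← Set.ncard_image_of_injective M (Sym2.map.injective f.injective)]
  exact (hM.map f).ncard_le_indMatchNum

end InducedMatching

section Join

variable {α β : Type*} {G : SimpleGraph α} {H : SimpleGraph β} {M : Set (Sym2 (α ⊕ β))}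

def SimpleGraph.Embedding.joinInl (G : SimpleGraph α) (H : SimpleGraph β) : G ↪g G.join H :=
  { Function.Embedding.inl with map_rel_iff' := Iff.rfl }

def SimpleGraph.Embedding.joinInr (G : SimpleGraph α) (H : SimpleGraph β) : H ↪g G.join H :=
  { Function.Embedding.inr with map_rel_iff' := Iff.rfl }

theorem SimpleGraph.join_adj_of_isLeft_ne {x y : α ⊕ β} (h : x.isLeft ≠ y.isLeft) :
    (G.join H).Adj x y := by
  rcases x with a | a <;> rcases y with b | b <;> trivial

theorem IsInducedMatching.isLeft_eq_of_join (hM : IsInducedMatching (G.join H) M)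
    {e f : Sym2 (α ⊕ β)} (he : e ∈ M) (hf : f ∈ M) (hne : e ≠ f) {u v : α ⊕ β}
    (hu : u ∈ e) (hv : v ∈ f) : u.isLeft = v.isLeft :=
  of_not_not fun h => (hM.2 e he f hf hne u hu v hv).2 (join_adj_of_isLeft_ne h)

theorem IsInducedMatching.subsingleton_or_subset_range_inl_or_inr
    (hM : IsInducedMatching (G.join H) M) :
    M.Subsingleton ∨ M ⊆ Set.range (Sym2.map Sum.inl) ∨ M ⊆ Set.range (Sym2.map Sum.inr) := by
  refine or_iff_not_imp_left.2 fun hM1 => ?_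
  obtain ⟨e, he, f, hf, hne⟩ := Set.not_subsingleton_iff.1 hM1
  have hside : ∀ g ∈ M, ∀ x ∈ g, x.isLeft = f.out.1.isLeft := by
    intro g hg x hx
    by_cases hgf : g = f
    · subst hgf
      exact (hM.isLeft_eq_of_join he hg hne e.out_fst_mem hx).symm.trans
        (hM.isLeft_eq_of_join he hg hne e.out_fst_mem g.out_fst_mem)
    · exact hM.isLeft_eq_of_join hg hf hgf hx f.out_fst_mem
  cases hw : f.out.1.isLeft with
  | false =>
    refine Or.inr fun g hg => Sym2.mem_range_map_of_forall_mem fun x hx => ?_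
    rw [Set.range_inr]
    simpa [hw] using hside g hg x hx
  | true =>
    refine Or.inl fun g hg => Sym2.mem_range_map_of_forall_mem fun x hx => ?_
    rw [Set.range_inl]
    exact (hside g hg x hx).trans hw

end Join

/-- For the join of two nonempty graphs,
$iν(G) = \max(iν(G₁), iν(G₂), 1)$. -/
theorem indMatchNum_join {α β : Type*} [Fintype α] [Fintype β]
    [Nonempty α] [Nonempty β] (G₁ : SimpleGraph α) (G₂ : SimpleGraph β) :
    indMatchNum (G₁.join G₂) = max (max (indMatchNum G₁) (indMatchNum G₂)) 1 := by
  refine le_antisymm (indMatchNum_le_of_forall fun M hM => ?_) (max_le (max_le ?_ ?_) ?_)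
  · rcases hM.subsingleton_or_subset_range_inl_or_inr with hM1 | hMl | hMr
    · exact (Set.ncard_le_one_iff_subsingleton.2 hM1).trans (le_max_right _ _)
    · exact (hM.ncard_le_indMatchNum_of_subset_range (.joinInl G₁ G₂) hMl).trans
        (le_max_of_le_left (le_max_left _ _))
    · exact (hM.ncard_le_indMatchNum_of_subset_range (.joinInr G₁ G₂) hMr).trans
        (le_max_of_le_left (le_max_right _ _))
  · exact indMatchNum_le_of_embedding (.joinInl G₁ G₂)
  · exact indMatchNum_le_of_embedding (.joinInr G₁ G₂)
  · exact one_le_indMatchNum_of_adj (G := G₁.join G₂)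
      (u := .inl (Classical.arbitrary α)) (v := .inr (Classical.arbitrary β)) trivial
end
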